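/- arXiv:2502.13432 — 11 statements merged into one kernel-verified Lean document; each statement's English description precedes it below -/
import Mathlib

section
/- If $A > 0$ and $\{a_n\}_{n=1}^\infty$ is a sequence of non-negative numbers with $a_1 \le A$ and $a_m \le a_{m-1} - \frac{2}{m} a_{m-1} + \frac{A}{m^2}$ for all $m \ge 2$, then $a_m \le \frac{A}{m}$ for all $m \ge 1$. -/
/-!
Induction on `m`. Since `1 - 2/(m+1) ≥ 0` for `m ≥ 1`, the recursion may be fed the bound
`a m ≤ A/m`, and then the identity
`(1 - 2/(m+1)) (A/m) + A/(m+1)² = A/(m+1) - A/(m(m+1)²)` closes the step.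
-/

lemma one_sub_two_div_mul_div_add_div_sq {n : ℝ} (hn : n ≠ 0) (hn₁ : n + 1 ≠ 0) (A : ℝ) :
    (1 - 2 / (n + 1)) * (A / n) + A / (n + 1) ^ 2 = A / (n + 1) - A / (n * (n + 1) ^ 2) := by
  field_simp
  ring

lemma recursion_step_le_div {A n x : ℝ} (hA : 0 ≤ A) (hn : 1 ≤ n) (hx : x ≤ A / n) :
    (1 - 2 / (n + 1)) * x + A / (n + 1) ^ 2 ≤ A / (n + 1) := by
  have hcoef : 0 ≤ 1 - 2 / (n + 1) := by
    rw [sub_nonneg, div_le_one (by linarith)]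
    linarith
  calc (1 - 2 / (n + 1)) * x + A / (n + 1) ^ 2
      ≤ (1 - 2 / (n + 1)) * (A / n) + A / (n + 1) ^ 2 := by gcongr
    _ = A / (n + 1) - A / (n * (n + 1) ^ 2) :=
        one_sub_two_div_mul_div_add_div_sq (by positivity) (by positivity) A
    _ ≤ A / (n + 1) := sub_le_self _ (by positivity)

theorem stmt_2_general (A : ℝ) (hA : 0 < A) (a : ℕ → ℝ)
    (h1 : a 1 ≤ A)
    (hrec : ∀ m, 2 ≤ m → a m ≤ a (m - 1) - (2 / (m : ℝ)) * a (m - 1) + A / (m : ℝ) ^ 2) :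
    ∀ m, 1 ≤ m → a m ≤ A / (m : ℝ) := by
  intro m hm
  induction m, hm using Nat.le_induction with
  | base => simpa using h1
  | succ n hn ih =>
    have hstep := hrec (n + 1) (by omega)
    rw [Nat.add_sub_cancel, Nat.cast_succ] at hstep
    rw [Nat.cast_succ]
    calc a (n + 1) ≤ (1 - 2 / ((n : ℝ) + 1)) * a n + A / ((n : ℝ) + 1) ^ 2 := by linarith
      _ ≤ A / ((n : ℝ) + 1) := recursion_step_le_div hA.le (by exact_mod_cast hn) ih

theorem stmt_2 (A : ℝ) (hA : 0 < A) (a : ℕ → ℝ)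
    (hnn : ∀ n, 1 ≤ n → 0 ≤ a n) (h1 : a 1 ≤ A)
    (hrec : ∀ m, 2 ≤ m → a m ≤ a (m - 1) - (2 / (m : ℝ)) * a (m - 1) + A / (m : ℝ) ^ 2) :
    ∀ m, 1 ≤ m → a m ≤ A / (m : ℝ) :=
  stmt_2_general A hA a h1 hrec
end

section
/- Let $0 < \alpha < \gamma \le 1$ and $A > 1$. Let $1 \ge a_1 \ge a_2 \ge \dots > 0$ be a non-increasing sequence of positive numbers with the property: whenever $a_\nu \ge A \nu^{-\alpha}$ for some $\nu \in \mathbb{N}$, we have $a_{\nu+1} \le a_\nu(1 - \gamma/\nu)$. Then there exists a constant $B = B(A, \alpha, \gamma)$ such that $a_n \le B n^{-\alpha}$ for all $n \ge 1$. -/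
/-!
Track the weighted sequence `a n * n ^ α`. Above the threshold the decay factor `1 - γ / n` beats
the growth `((n + 1) / n) ^ α ≤ 1 + α / n` of the weight because `α ≤ γ`, so the weighted value does
not increase; below the threshold it is less than `A`, and one step at most doubles it. Hence it
never exceeds `2 * A`.
-/

namespace Real

variable {x α γ u v c : ℝ}

lemma add_one_rpow_le_one_add_div_mul_rpow (hx : 0 < x) (hα0 : 0 ≤ α) (hα1 : α ≤ 1) :
    (x + 1) ^ α ≤ (1 + α / x) * x ^ α := by
  have hbern : (1 + 1 / x) ^ α ≤ 1 + α * (1 / x) :=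
    rpow_one_add_le_one_add_mul_self (by linarith [one_div_pos.2 hx]) hα0 hα1
  calc (x + 1) ^ α = (1 + 1 / x) ^ α * x ^ α := by
        rw [← mul_rpow (by positivity) hx.le]; field_simp
    _ ≤ (1 + α / x) * x ^ α := by
        rw [mul_one_div] at hbern; gcongr

lemma mul_add_one_rpow_le_of_le_mul_one_sub (hx : 0 < x) (hγx : γ ≤ x) (hα0 : 0 ≤ α)
    (hαγ : α ≤ γ) (hα1 : α ≤ 1) (hu : 0 ≤ u) (hv : v ≤ u * (1 - γ / x)) :
    v * (x + 1) ^ α ≤ u * x ^ α := by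
  have hdecay : 0 ≤ 1 - γ / x := sub_nonneg.2 ((div_le_one hx).2 hγx)
  have hfactor : (1 - γ / x) * (1 + α / x) ≤ 1 := by
    have : α / x ≤ γ / x := by gcongr
    nlinarith [div_nonneg hα0 hx.le]
  calc v * (x + 1) ^ α ≤ u * (1 - γ / x) * ((1 + α / x) * x ^ α) :=
        mul_le_mul hv (add_one_rpow_le_one_add_div_mul_rpow hx hα0 hα1) (by positivity)
          (by positivity)
    _ = (1 - γ / x) * (1 + α / x) * (u * x ^ α) := by ring
    _ ≤ u * x ^ α := mul_le_of_le_one_left (by positivity) hfactor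

lemma mul_add_one_rpow_le_two_mul (hx : 1 ≤ x) (hα0 : 0 ≤ α) (hα1 : α ≤ 1) (hv : 0 ≤ v)
    (hvu : v ≤ u) : v * (x + 1) ^ α ≤ 2 * (u * x ^ α) := by
  have hx0 : 0 < x := by linarith
  have hgrowth : 1 + α / x ≤ 2 := by linarith [(div_le_one hx0).2 (hα1.trans hx)]
  calc v * (x + 1) ^ α ≤ v * ((1 + α / x) * x ^ α) :=
        mul_le_mul_of_nonneg_left (add_one_rpow_le_one_add_div_mul_rpow hx0 hα0 hα1) hv
    _ ≤ u * (2 * x ^ α) := by gcongr; linarith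
    _ = 2 * (u * x ^ α) := by ring

lemma le_mul_rpow_neg_iff (hx : 0 < x) : u ≤ c * x ^ (-α) ↔ u * x ^ α ≤ c := by
  rw [rpow_neg hx.le, ← div_eq_mul_inv, le_div_iff₀ (rpow_pos_of_pos hx α)]

lemma mul_rpow_neg_le_iff (hx : 0 < x) : c * x ^ (-α) ≤ u ↔ c ≤ u * x ^ α := by
  rw [rpow_neg hx.le, ← div_eq_mul_inv, div_le_iff₀ (rpow_pos_of_pos hx α)]

end Real

open Real

theorem stmt_3 (α γ A : ℝ) (hα : 0 < α) (hαγ : α < γ) (hγ : γ ≤ 1) (hA : 1 < A)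
    (a : ℕ → ℝ) (ha1 : a 1 ≤ 1)
    (hpos : ∀ n, 1 ≤ n → 0 < a n)
    (hdec : ∀ n, 1 ≤ n → a (n + 1) ≤ a n)
    (hcond : ∀ ν : ℕ, 1 ≤ ν → A * (ν : ℝ) ^ (-α) ≤ a ν → a (ν + 1) ≤ a ν * (1 - γ / ν)) :
    ∃ B : ℝ, 0 < B ∧ ∀ n : ℕ, 1 ≤ n → a n ≤ B * (n : ℝ) ^ (-α) := by
  have hα1 : α ≤ 1 := hαγ.le.trans hγ
  have hweighted : ∀ n, 1 ≤ n → a n * (n : ℝ) ^ α ≤ 2 * A := by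
    intro n hn
    induction n, hn using Nat.le_induction with
    | base => simp only [Nat.cast_one, one_rpow, mul_one]; linarith
    | succ m hm ih =>
      have hm' : (1 : ℝ) ≤ m := by exact_mod_cast hm
      push_cast
      by_cases habove : A * (m : ℝ) ^ (-α) ≤ a m
      · exact (mul_add_one_rpow_le_of_le_mul_one_sub (by linarith) (hγ.trans hm') hα.le hαγ.le
          hα1 (hpos m hm).le (hcond m hm habove)).trans ih
      · rw [mul_rpow_neg_le_iff (by linarith), not_le] at habove
        calc a (m + 1) * ((m : ℝ) + 1) ^ α ≤ 2 * (a m * (m : ℝ) ^ α) :=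
              mul_add_one_rpow_le_two_mul hm' hα.le hα1 (hpos (m + 1) (by omega)).le (hdec m hm)
          _ ≤ 2 * A := by linarith
  exact ⟨2 * A, by linarith, fun n hn =>
    (le_mul_rpow_neg_iff (by exact_mod_cast hn)).2 (hweighted n hn)⟩
end

section
/- Let $r > 0$ and $A > 0$. Assume a sequence of non-negative reals $\{a_n\}_{n=1}^\infty$ satisfies $a_1 \le A$ and $a_{n+1} \le a_n\left(1 - (a_n/A)^{1/r}\right)$ for all $n \ge 1$. Then: (i) if $r \in (0,1]$, $a_m \le A m^{-r}$ for all $m$; (ii) if $r \ge 1$, $a_m \le A r^r m^{-r}$ for all $m$. -/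
/-!
Put `b n = (a n / A) ^ (1 / r)`. Since `a n ≤ A`, each `b n` lies in `[0, 1]`, and taking `1 / r`-th
powers in the recursion gives `b (n + 1) ≤ b n * (1 - b n) ^ (1 / r) ≤ b n * (1 - b n / c)` with
`c = max 1 r`: for `r ≤ 1` because `1 / r ≥ 1`, for `r ≥ 1` by Bernoulli's inequality
`(1 - x) ^ α ≤ 1 - α x`. The elementary recursion `b (n + 1) ≤ b n * (1 - b n / c)`, `b 1 ≤ c`
forces `b n ≤ c / n`, and raising back to the power `r` gives `a n ≤ A * c ^ r * n ^ (-r)`.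
-/

open Real

theorem mul_one_sub_div_mul_add_one_le {c x n : ℝ} (hc : 0 < c) (hx : 0 ≤ x) (hn : 1 ≤ n)
    (hxn : x * n ≤ c) : x * (1 - x / c) * (n + 1) ≤ c := by
  have hxc : x ≤ c := by nlinarith
  -- `c ^ 2 - x * (c - x) * (n + 1) = (c - n * x) * (c - x) + x ^ 2`
  have key : x * (c - x) * (n + 1) ≤ c ^ 2 := by
    nlinarith [mul_nonneg (sub_nonneg.2 hxn) (sub_nonneg.2 hxc), sq_nonneg x]
  calc x * (1 - x / c) * (n + 1) = x * (c - x) * (n + 1) / c := by field_simp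
    _ ≤ c ^ 2 / c := by gcongr
    _ = c := by field_simp

theorem le_div_of_le_mul_one_sub_div {c : ℝ} (hc : 0 < c) {b : ℕ → ℝ}
    (hnn : ∀ n, 1 ≤ n → 0 ≤ b n) (h1 : b 1 ≤ c)
    (hrec : ∀ n, 1 ≤ n → b (n + 1) ≤ b n * (1 - b n / c)) :
    ∀ n, 1 ≤ n → b n ≤ c / n := by
  intro n hn
  induction n, hn using Nat.le_induction with
  | base => simpa using h1
  | succ n hn ih =>
    have hn' : (1 : ℝ) ≤ n := by exact_mod_cast hn
    rw [Nat.cast_succ, le_div_iff₀ (by positivity)]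
    calc b (n + 1) * (n + 1) ≤ b n * (1 - b n / c) * (n + 1) := by gcongr; exact hrec n hn
      _ ≤ c := mul_one_sub_div_mul_add_one_le hc (hnn n hn) hn'
          ((le_div_iff₀ (by positivity)).1 ih)

theorem one_sub_rpow_inv_le {r t : ℝ} (hr : 0 < r) (ht0 : 0 ≤ t) (ht1 : t ≤ 1) :
    (1 - t) ^ r⁻¹ ≤ 1 - t / max 1 r := by
  rcases le_total r 1 with hr1 | hr1
  · rw [max_eq_left hr1, div_one]
    calc (1 - t) ^ r⁻¹ ≤ (1 - t) ^ (1 : ℝ) :=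
          rpow_le_rpow_of_exponent_ge' (by linarith) (by linarith) zero_le_one
            (one_le_inv₀ hr |>.2 hr1)
      _ = 1 - t := rpow_one _
  · rw [max_eq_right hr1]
    calc (1 - t) ^ r⁻¹ = (1 + -t) ^ r⁻¹ := by rw [sub_eq_add_neg]
      _ ≤ 1 + r⁻¹ * -t :=
          rpow_one_add_le_one_add_mul_self (by linarith) (by positivity) (inv_le_one_of_one_le₀ hr1)
      _ = 1 - t / r := by ring

theorem rpow_inv_le_of_le_mul_one_sub_rpow_inv {r x y : ℝ} (hr : 0 < r) (hx0 : 0 ≤ x)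
    (hx1 : x ≤ 1) (hy : 0 ≤ y) (hxy : y ≤ x * (1 - x ^ r⁻¹)) :
    y ^ r⁻¹ ≤ x ^ r⁻¹ * (1 - x ^ r⁻¹ / max 1 r) := by
  have ht0 : 0 ≤ x ^ r⁻¹ := rpow_nonneg hx0 _
  have ht1 : x ^ r⁻¹ ≤ 1 := rpow_le_one hx0 hx1 (by positivity)
  calc y ^ r⁻¹ ≤ (x * (1 - x ^ r⁻¹)) ^ r⁻¹ := by gcongr
    _ = x ^ r⁻¹ * (1 - x ^ r⁻¹) ^ r⁻¹ := mul_rpow hx0 (by linarith)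
    _ ≤ x ^ r⁻¹ * (1 - x ^ r⁻¹ / max 1 r) := by gcongr; exact one_sub_rpow_inv_le hr ht0 ht1

theorem le_mul_rpow_neg_of_le_mul_one_sub_rpow_inv {r A : ℝ} (hr : 0 < r) (hA : 0 < A) {a : ℕ → ℝ}
    (hnn : ∀ n, 1 ≤ n → 0 ≤ a n) (h1 : a 1 ≤ A)
    (hrec : ∀ n, 1 ≤ n → a (n + 1) ≤ a n * (1 - (a n / A) ^ r⁻¹)) :
    ∀ n, 1 ≤ n → a n ≤ A * max 1 r ^ r * (n : ℝ) ^ (-r) := by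
  have hle : ∀ n, 1 ≤ n → a n ≤ A := by
    intro n hn
    induction n, hn using Nat.le_induction with
    | base => exact h1
    | succ n hn ih =>
      have : 0 ≤ (a n / A) ^ r⁻¹ := rpow_nonneg (div_nonneg (hnn n hn) hA.le) _
      nlinarith [hrec n hn, hnn n hn]
  have hx0 : ∀ n, 1 ≤ n → 0 ≤ a n / A := fun n hn => div_nonneg (hnn n hn) hA.le
  have hx1 : ∀ n, 1 ≤ n → a n / A ≤ 1 := fun n hn => (div_le_one hA).2 (hle n hn)
  have hc : (0 : ℝ) < max 1 r := lt_max_of_lt_left one_pos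
  have hb := le_div_of_le_mul_one_sub_div hc (b := fun n => (a n / A) ^ r⁻¹)
    (fun n hn => rpow_nonneg (hx0 n hn) _)
    ((rpow_le_one (hx0 1 le_rfl) (hx1 1 le_rfl) (by positivity)).trans (le_max_left _ _))
    (fun n hn => rpow_inv_le_of_le_mul_one_sub_rpow_inv hr (hx0 n hn) (hx1 n hn) (hx0 _ (by omega))
      (by rw [← mul_div_right_comm]; exact div_le_div_of_nonneg_right (hrec n hn) hA.le))
  intro n hn
  have hn' : (0 : ℝ) < n := by exact_mod_cast hn
  have : a n / A ≤ (max 1 r / n) ^ r := by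
    rw [← rpow_inv_rpow (hx0 n hn) hr.ne']
    exact rpow_le_rpow (rpow_nonneg (hx0 n hn) _) (hb n hn) hr.le
  rw [div_rpow hc.le hn'.le, div_le_iff₀ hA] at this
  rw [rpow_neg hn'.le]
  calc a n ≤ max 1 r ^ r / (n : ℝ) ^ r * A := this
    _ = A * max 1 r ^ r * ((n : ℝ) ^ r)⁻¹ := by ring

theorem stmt_4 (r A : ℝ) (hr : 0 < r) (hA : 0 < A) (a : ℕ → ℝ)
    (hnn : ∀ n, 1 ≤ n → 0 ≤ a n) (h1 : a 1 ≤ A)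
    (hrec : ∀ n, 1 ≤ n → a (n + 1) ≤ a n * (1 - (a n / A) ^ (1 / r))) :
    (r ≤ 1 → ∀ m : ℕ, 1 ≤ m → a m ≤ A * (m : ℝ) ^ (-r)) ∧
    (1 ≤ r → ∀ m : ℕ, 1 ≤ m → a m ≤ A * r ^ r * (m : ℝ) ^ (-r)) := by
  simp only [one_div] at hrec
  have hbound := le_mul_rpow_neg_of_le_mul_one_sub_rpow_inv hr hA hnn h1 hrec
  refine ⟨fun hr1 m hm => ?_, fun hr1 m hm => ?_⟩
  · simpa [max_eq_left hr1] using hbound m hm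
  · simpa [max_eq_right hr1] using hbound m hm
end

section
/- Let $\varphi : [0,1] \to [0,1]$ be an increasing convex function with $\varphi(0) = 0$, and let $A > 0$. Assume a sequence $A \ge a_1 \ge a_2 \ge \cdots \ge 0$ satisfies $a_{n+1} \le a_n(1 - \varphi(a_n/A))$ for all $n \ge 1$. Then $a_m \le A \varphi^{-1}(1/m)$ for all $m \ge 1$, where $\varphi^{-1}(1/m)$ denotes any value $u$ with $\varphi(u) \ge 1/m$ minimal (i.e., $\varphi(a_m/A) \le 1/m$). -/
/-!
Put `x n = φ (a n / A)`. Since `a (n+1) / A ≤ (1 - x n) • (a n / A)`, monotonicity and convexity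
of `φ` together with `φ 0 = 0` give `x (n+1) ≤ (1 - x n) * x n`, and a sequence obeying this
quadratic recursion with `x 1 ≤ 1` satisfies `x m ≤ 1 / m` by induction.
-/

theorem ConvexOn.map_smul_le_smul_of_map_zero {𝕜 E β : Type*} [Ring 𝕜] [PartialOrder 𝕜]
    [IsOrderedRing 𝕜] [AddCommMonoid E] [Module 𝕜 E] [AddCommMonoid β] [PartialOrder β]
    [Module 𝕜 β] {s : Set E} {f : E → β} (hf : ConvexOn 𝕜 s f) (h0 : (0 : E) ∈ s)
    (hf0 : f 0 = 0) {x : E} (hx : x ∈ s) {t : 𝕜} (ht0 : 0 ≤ t) (ht1 : t ≤ 1) :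
    f (t • x) ≤ t • f x := by
  simpa [hf0] using hf.2 hx h0 ht0 (sub_nonneg.2 ht1) (add_sub_cancel t 1)

theorem mul_one_sub_le_one_div_add_two {t : ℝ} {k : ℕ} (ht : t ≤ 1 / (k + 1)) :
    t * (1 - t) ≤ 1 / (k + 2) := by
  rcases Nat.eq_zero_or_pos k with rfl | hk
  · nlinarith [sq_nonneg (2 * t - 1)]
  have hk1 : (1 : ℝ) ≤ k := by exact_mod_cast hk
  set u : ℝ := 1 / (k + 1) with hu
  have hu_half : u ≤ 1 / 2 := by rw [hu]; gcongr; linarith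
  -- `t ↦ t * (1 - t)` is increasing on `(-∞, 1/2]`
  calc t * (1 - t) ≤ u * (1 - u) := by nlinarith
    _ = k / (k + 1) ^ 2 := by rw [hu]; field_simp; ring
    _ ≤ 1 / (k + 2) := by rw [div_le_div_iff₀ (by positivity) (by positivity)]; nlinarith

theorem le_one_div_succ_of_le_mul_one_sub {x : ℕ → ℝ} (hx0 : x 0 ≤ 1)
    (hrec : ∀ n, x (n + 1) ≤ x n * (1 - x n)) (n : ℕ) : x n ≤ 1 / (n + 1) := by
  induction n with
  | zero => simpa using hx0
  | succ k ih =>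
    push_cast
    rw [add_assoc, one_add_one_eq_two]
    exact (hrec k).trans (mul_one_sub_le_one_div_add_two ih)

theorem stmt_5 (φ : ℝ → ℝ) (hmono : MonotoneOn φ (Set.Icc 0 1))
    (hconv : ConvexOn ℝ (Set.Icc 0 1) φ)
    (hmap : ∀ x ∈ Set.Icc (0 : ℝ) 1, φ x ∈ Set.Icc (0 : ℝ) 1)
    (hφ0 : φ 0 = 0)
    (A : ℝ) (hA : 0 < A) (a : ℕ → ℝ)
    (ha1 : a 1 ≤ A) (hnn : ∀ n, 1 ≤ n → 0 ≤ a n)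
    (hdec : ∀ n, 1 ≤ n → a (n + 1) ≤ a n)
    (hrec : ∀ n, 1 ≤ n → a (n + 1) ≤ a n * (1 - φ (a n / A))) :
    ∀ m : ℕ, 1 ≤ m → φ (a m / A) ≤ 1 / m := by
  have ha_le : ∀ n, 1 ≤ n → a n ≤ A :=
    Nat.le_induction ha1 fun n hn ih => (hdec n hn).trans ih
  have hmem : ∀ n, 1 ≤ n → a n / A ∈ Set.Icc (0 : ℝ) 1 := fun n hn =>
    ⟨div_nonneg (hnn n hn) hA.le, (div_le_one hA).2 (ha_le n hn)⟩
  have hstep : ∀ n, 1 ≤ n → φ (a (n + 1) / A) ≤ φ (a n / A) * (1 - φ (a n / A)) := by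
    intro n hn
    obtain ⟨hx0, hx1⟩ := hmap _ (hmem n hn)
    have hdiv : a (n + 1) / A ≤ (1 - φ (a n / A)) • (a n / A) := by
      rw [smul_eq_mul, mul_div_assoc', mul_comm]
      exact div_le_div_of_nonneg_right (hrec n hn) hA.le
    calc φ (a (n + 1) / A)
        ≤ φ ((1 - φ (a n / A)) • (a n / A)) :=
          hmono (hmem _ (by omega)) (hconv.1.smul_mem_of_zero_mem
            (by simp) (hmem n hn) ⟨by linarith, by linarith⟩) hdiv
      _ ≤ (1 - φ (a n / A)) • φ (a n / A) :=
          hconv.map_smul_le_smul_of_map_zero (by simp) hφ0 (hmem n hn) (by linarith) (by linarith)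
      _ = φ (a n / A) * (1 - φ (a n / A)) := mul_comm _ _
  intro m hm
  obtain ⟨n, rfl⟩ := Nat.exists_eq_add_of_le' hm
  have := le_one_div_succ_of_le_mul_one_sub (x := fun n => φ (a (n + 1) / A))
    (hmap _ (hmem 1 le_rfl)).2 (fun n => hstep (n + 1) (by omega)) n
  simpa using this
end

section
/- Let $\varphi : [0,1] \to [0,1]$ be increasing, convex, differentiable with $\varphi(0)=0$, and suppose there exists $\beta > 0$ such that $x \varphi'(\theta) \ge \beta \varphi(x)$ for all $x \in (0,1]$ and $\theta \in (0,x]$. If a sequence $A \ge a_1 \ge a_2 \ge \cdots \ge 0$ satisfies $a_{n+1} \le a_n(1 - \varphi(a_n/A))$, then $\varphi(a_m/A) \le 1/(\beta m)$ for all $m \ge 1$. -/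
/-! The mean value theorem on `[x(1-α), x]` together with `x φ'(θ) ≥ β φ(x)` gives
`φ(x(1-α)) ≤ φ(x)(1-αβ)`. Applied with `x = aₙ/A` and `α = φ(aₙ/A)`, and using that `φ` is
increasing, the normalized values `wₙ = β φ(aₙ/A)` satisfy `wₙ₊₁ ≤ wₙ(1 - wₙ)`, and every
nonnegative sequence with this property satisfies `wₘ ≤ 1/m`. -/

open Set Filter Topology

theorem le_one_div_of_succ_le_mul_one_sub {w : ℕ → ℝ} (hnn : ∀ n, 1 ≤ n → 0 ≤ w n)
    (hrec : ∀ n, 1 ≤ n → w (n + 1) ≤ w n * (1 - w n)) :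
    ∀ m : ℕ, 1 ≤ m → w m ≤ 1 / m := by
  have hle_one : ∀ n, 1 ≤ n → w n ≤ 1 := fun n hn => by
    nlinarith [hnn n hn, hnn (n + 1) (by omega), hrec n hn]
  intro m hm
  induction m, hm using Nat.le_induction with
  | base => simpa using hle_one 1 le_rfl
  | succ n hn ih =>
    have hn1 : (1 : ℝ) ≤ n := by exact_mod_cast hn
    have hwn : w n * n ≤ 1 := by rwa [le_div_iff₀ (by positivity)] at ih
    rw [le_div_iff₀ (by positivity)]
    push_cast
    -- with `v = w n`: `v (1 - v) (n + 1) = 1 - (1 - v n) (1 - v) - v²`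
    nlinarith [hrec n hn, hnn n hn, hle_one n hn,
      mul_nonneg (sub_nonneg.2 hwn) (sub_nonneg.2 (hle_one n hn)), sq_nonneg (w n)]

section

variable {φ φ' : ℝ → ℝ} {β : ℝ}

theorem map_mul_one_sub_le_of_mem_Ioo (hderiv : ∀ θ ∈ Ioc (0 : ℝ) 1, HasDerivAt φ (φ' θ) θ)
    (hβcond : ∀ x ∈ Ioc (0 : ℝ) 1, ∀ θ ∈ Ioc (0 : ℝ) x, β * φ x ≤ x * φ' θ)
    {x α : ℝ} (hx : x ∈ Ioc 0 1) (hα : α ∈ Ioo 0 1) :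
    φ (x * (1 - α)) ≤ φ x * (1 - α * β) := by
  obtain ⟨hx0, hx1⟩ := hx
  have hz0 : 0 < x * (1 - α) := mul_pos hx0 (by linarith [hα.2])
  have hzx : x * (1 - α) < x := by nlinarith [hα.1]
  obtain ⟨θ, hθ, hslope⟩ := exists_hasDerivAt_eq_slope φ φ' hzx
    (fun w hw => (hderiv w ⟨hz0.trans_le hw.1, hw.2.trans hx1⟩).continuousAt.continuousWithinAt)
    (fun w hw => hderiv w ⟨hz0.trans hw.1, hw.2.le.trans hx1⟩)
  have hmvt : φ x - φ (x * (1 - α)) = φ' θ * x * α := by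
    rw [hslope, show x - x * (1 - α) = x * α by ring, mul_assoc,
      div_mul_cancel₀ _ (mul_pos hx0 hα.1).ne']
  have hβθ : β * φ x ≤ x * φ' θ := hβcond x ⟨hx0, hx1⟩ θ ⟨hz0.trans hθ.1, hθ.2.le⟩
  nlinarith [hα.1]

theorem map_mul_one_sub_le (hderiv : ∀ θ ∈ Ioc (0 : ℝ) 1, HasDerivAt φ (φ' θ) θ)
    (hβcond : ∀ x ∈ Ioc (0 : ℝ) 1, ∀ θ ∈ Ioc (0 : ℝ) x, β * φ x ≤ x * φ' θ)
    (hnonneg : ∀ x ∈ Icc (0 : ℝ) 1, 0 ≤ φ x) (hφ0 : φ 0 = 0)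
    {x α : ℝ} (hx : x ∈ Icc 0 1) (hα : α ∈ Icc 0 1) :
    φ (x * (1 - α)) ≤ φ x * (1 - α * β) := by
  rcases hx.1.eq_or_lt with rfl | hx0
  · simp [hφ0]
  rcases hα.1.eq_or_lt with rfl | hα0
  · simp
  rcases hα.2.lt_or_eq with hα1 | rfl
  · exact map_mul_one_sub_le_of_mem_Ioo hderiv hβcond ⟨hx0, hx.2⟩ ⟨hα0, hα1⟩
  -- `α = 1`: let `α ↑ 1` in `0 ≤ φ(x(1-α)) ≤ φ(x)(1-αβ)`.
  have hlim : Tendsto (fun α => φ x * (1 - α * β)) (𝓝[<] 1) (𝓝 (φ x * (1 - 1 * β))) :=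
    (by fun_prop : Continuous fun α : ℝ => φ x * (1 - α * β)).continuousAt.continuousWithinAt
  have hpos : ∀ α ∈ Ioo (0 : ℝ) 1, 0 ≤ φ x * (1 - α * β) := fun α hα =>
    (hnonneg _ ⟨mul_nonneg hx.1 (by linarith [hα.2]), by nlinarith [hx.2, hα.1]⟩).trans
      (map_mul_one_sub_le_of_mem_Ioo hderiv hβcond ⟨hx0, hx.2⟩ hα)
  simpa [hφ0] using ge_of_tendsto hlim (eventually_of_mem (Ioo_mem_nhdsLT one_pos) hpos)

end

theorem stmt_6_general (φ φ' : ℝ → ℝ) (hmono : MonotoneOn φ (Set.Icc 0 1))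
    (hmap : ∀ x ∈ Set.Icc (0 : ℝ) 1, φ x ∈ Set.Icc (0 : ℝ) 1)
    (hφ0 : φ 0 = 0)
    (hderiv : ∀ θ ∈ Set.Ioc (0 : ℝ) 1, HasDerivAt φ (φ' θ) θ)
    (β : ℝ) (hβ : 0 < β)
    (hβcond : ∀ x ∈ Set.Ioc (0 : ℝ) 1, ∀ θ ∈ Set.Ioc (0 : ℝ) x, β * φ x ≤ x * φ' θ)
    (A : ℝ) (hA : 0 < A) (a : ℕ → ℝ)
    (ha1 : a 1 ≤ A) (hnn : ∀ n, 1 ≤ n → 0 ≤ a n)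
    (hdec : ∀ n, 1 ≤ n → a (n + 1) ≤ a n)
    (hrec : ∀ n, 1 ≤ n → a (n + 1) ≤ a n * (1 - φ (a n / A))) :
    ∀ m : ℕ, 1 ≤ m → φ (a m / A) ≤ 1 / (β * m) := by
  have hle : ∀ n, 1 ≤ n → a n ≤ A := fun n hn =>
    Nat.le_induction ha1 (fun k hk ih => (hdec k hk).trans ih) n hn
  have hx : ∀ n, 1 ≤ n → a n / A ∈ Icc 0 1 := fun n hn =>
    ⟨div_nonneg (hnn n hn) hA.le, (div_le_one hA).2 (hle n hn)⟩
  have hstep : ∀ n, 1 ≤ n →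
      φ (a (n + 1) / A) ≤ φ (a n / A) * (1 - φ (a n / A) * β) := fun n hn => by
    obtain ⟨hφx0, hφx1⟩ := hmap _ (hx n hn)
    have hz : a n / A * (1 - φ (a n / A)) ∈ Icc 0 1 :=
      ⟨mul_nonneg (hx n hn).1 (by linarith), by nlinarith [(hx n hn).2]⟩
    have hyz : a (n + 1) / A ≤ a n / A * (1 - φ (a n / A)) := by
      rw [div_mul_eq_mul_div]
      exact div_le_div_of_nonneg_right (hrec n hn) hA.le
    exact (hmono (hx (n + 1) (by omega)) hz hyz).trans <| map_mul_one_sub_le hderiv hβcond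
      (fun x hx => (hmap x hx).1) hφ0 (hx n hn) ⟨hφx0, hφx1⟩
  have hw := le_one_div_of_succ_le_mul_one_sub (w := fun n => β * φ (a n / A))
    (fun n hn => mul_nonneg hβ.le (hmap _ (hx n hn)).1)
    (fun n hn => by nlinarith [hstep n hn])
  intro m hm
  rw [mul_comm, ← div_div, le_div_iff₀ hβ, mul_comm]
  exact hw m hm

theorem stmt_6 (φ φ' : ℝ → ℝ) (hmono : MonotoneOn φ (Set.Icc 0 1))
    (hconv : ConvexOn ℝ (Set.Icc 0 1) φ)
    (hmap : ∀ x ∈ Set.Icc (0 : ℝ) 1, φ x ∈ Set.Icc (0 : ℝ) 1)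
    (hφ0 : φ 0 = 0)
    (hderiv : ∀ θ ∈ Set.Ioc (0 : ℝ) 1, HasDerivAt φ (φ' θ) θ)
    (β : ℝ) (hβ : 0 < β)
    (hβcond : ∀ x ∈ Set.Ioc (0 : ℝ) 1, ∀ θ ∈ Set.Ioc (0 : ℝ) x, β * φ x ≤ x * φ' θ)
    (A : ℝ) (hA : 0 < A) (a : ℕ → ℝ)
    (ha1 : a 1 ≤ A) (hnn : ∀ n, 1 ≤ n → 0 ≤ a n)
    (hdec : ∀ n, 1 ≤ n → a (n + 1) ≤ a n)
    (hrec : ∀ n, 1 ≤ n → a (n + 1) ≤ a n * (1 - φ (a n / A))) :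
    ∀ m : ℕ, 1 ≤ m → φ (a m / A) ≤ 1 / (β * m) :=
  stmt_6_general φ φ' hmono hmap hφ0 hderiv β hβ hβcond A hA a ha1 hnn hdec hrec
end

section
/- Let $q \in (1,2]$, $B > 0$, $\delta \in (0,1]$, $0 < v \le 1$, and let $N = \lfloor \delta^{-1/q} \rfloor$. If a non-negative sequence $a_0, a_1, \dots, a_N$ satisfies $a_m \le a_{m-1} + \inf_{0 \le \lambda \le 1}(-\lambda v a_{m-1} + B \lambda^q) + \delta$ for all $1 \le m \le N$, then $a_m \le C(q, v, B, a_0)\, m^{1-q}$ for $1 \le m \le N$, where $C(q,v,B,a_0) \le C'(q,B,a_0) v^{-q}$. -/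
/-!
Taking `λ = 0` in the infimum gives `a m ≤ a 0 + m δ ≤ a 0 + 1`, since `m ≤ N` forces
`δ ≤ m ^ (-q)`. When `v m ≤ q` this is already enough, because then
`v ^ (-q) m ^ (1 - q) = m (v m) ^ (-q) ≥ q ^ (-q)`. When `v m > q`, take `λ = q / (v m)` and induct:
`a m ≤ (1 - q / m) a (m - 1) + (B q ^ q + 1) v ^ (-q) m ^ (-q)`, and Bernoulli's inequality
`(1 - 1 / m) ^ q ≥ 1 - q / m` gives `(1 - q / m) (m - 1) ^ (1 - q) ≤ m ^ (1 - q) - m ^ (-q)`,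
so the induction closes once `C ≥ B q ^ q + 1`.
-/

open Real Set

lemma sub_one_rpow_mul_one_sub_div_le {q M : ℝ} (hq : 1 ≤ q) (hM : 1 < M) :
    (M - 1) ^ (1 - q) * (1 - q / M) ≤ M ^ (1 - q) - M ^ (-q) := by
  have hM0 : 0 < M := by linarith
  set t := 1 - 1 / M with ht
  have ht0 : 0 < t := by rw [ht, sub_pos, div_lt_one hM0]; exact hM
  have hbernoulli : 1 - q / M ≤ t ^ q := by
    have := one_add_mul_self_le_rpow_one_add (s := -(1 / M)) (by
      have : 1 / M ≤ 1 := (div_le_one hM0).2 hM.le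
      linarith) hq
    calc 1 - q / M = 1 + q * -(1 / M) := by ring
      _ ≤ (1 + -(1 / M)) ^ q := this
      _ = t ^ q := by rw [← sub_eq_add_neg]
  calc (M - 1) ^ (1 - q) * (1 - q / M)
      = M ^ (1 - q) * (t ^ (1 - q) * (1 - q / M)) := by
        rw [show M - 1 = M * t by rw [ht]; field_simp, mul_rpow hM0.le ht0.le, mul_assoc]
    _ ≤ M ^ (1 - q) * (t ^ (1 - q) * t ^ q) := by gcongr
    _ = M ^ (1 - q) - M ^ (1 - q) / M := by
        rw [← rpow_add ht0, sub_add_cancel, rpow_one, ht]; ring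
    _ = M ^ (1 - q) - M ^ (-q) := by
        rw [← rpow_sub_one hM0.ne']; ring_nf

lemma le_rpow_neg_of_le_rpow_neg_inv {δ q x : ℝ} (hδ : 0 < δ) (hq : 0 < q) (hx : 0 < x)
    (h : x ≤ δ ^ (-1 / q)) : δ ≤ x ^ (-q) :=
  calc δ = (δ ^ (-1 / q)) ^ (-q) := by
        rw [← rpow_mul hδ.le, show -1 / q * -q = 1 by field_simp, rpow_one]
    _ ≤ x ^ (-q) := rpow_le_rpow_of_nonpos hx h (by linarith)

lemma le_add_mul_of_le_pred_add {a : ℕ → ℝ} {δ : ℝ} {N : ℕ}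
    (h : ∀ m, 1 ≤ m → m ≤ N → a m ≤ a (m - 1) + δ) : ∀ m ≤ N, a m ≤ a 0 + m * δ := by
  intro m hm
  induction m with
  | zero => simp
  | succ n ih =>
    have := h (n + 1) (by omega) hm
    rw [Nat.add_sub_cancel] at this
    push_cast
    linarith [ih (by omega)]

lemma le_one_sub_mul_add_of_le_add_sInf {q B v x y δ l : ℝ} (hq : 0 ≤ q)
    (hl : l ∈ Icc (0 : ℝ) 1)
    (h : y ≤ x + sInf ((fun l : ℝ => -(l * v * x) + B * l ^ q) '' Icc 0 1) + δ) :
    y ≤ (1 - l * v) * x + B * l ^ q + δ := by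
  have hbdd : BddBelow ((fun l : ℝ => -(l * v * x) + B * l ^ q) '' Icc 0 1) :=
    isCompact_Icc.bddBelow_image (by
      have := continuous_rpow_const hq
      fun_prop)
  have := csInf_le hbdd (mem_image_of_mem _ hl)
  linarith

lemma rpow_neg_le_rpow_neg_mul_rpow_one_sub {q v m : ℝ} (hq : 0 ≤ q) (hv : 0 < v) (hm : 1 ≤ m)
    (h : v * m ≤ q) : q ^ (-q) ≤ v ^ (-q) * m ^ (1 - q) := by
  have hm0 : 0 < m := by linarith
  calc q ^ (-q) ≤ (v * m) ^ (-q) := rpow_le_rpow_of_nonpos (by positivity) h (by linarith)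
    _ ≤ m * (v * m) ^ (-q) := le_mul_of_one_le_left (by positivity) hm
    _ = v ^ (-q) * m ^ (1 - q) := by
        rw [mul_rpow hv.le hm0.le, rpow_sub hm0, rpow_one, rpow_neg hm0.le]; ring

lemma one_sub_mul_add_le_mul_rpow_one_sub {q B v C M x δ : ℝ} (hq : 1 < q) (hv : 0 < v)
    (hv1 : v ≤ 1) (hC0 : 0 ≤ C) (hCB : B * q ^ q + 1 ≤ C) (hvM : q ≤ v * M)
    (hx : x ≤ C * v ^ (-q) * (M - 1) ^ (1 - q)) (hδ : δ ≤ M ^ (-q)) :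
    (1 - q / (v * M) * v) * x + B * (q / (v * M)) ^ q + δ ≤ C * v ^ (-q) * M ^ (1 - q) := by
  have hqM : q ≤ M := hvM.trans (by nlinarith)
  have hM0 : 0 < M := by linarith
  have hcoef : q / (v * M) * v = q / M := by field_simp
  have hpow : (q / (v * M)) ^ q = q ^ q * (v ^ (-q) * M ^ (-q)) := by
    rw [div_rpow (by linarith) (by positivity), mul_rpow hv.le hM0.le, rpow_neg hv.le,
      rpow_neg hM0.le]
    field_simp
  have hδ' : δ ≤ v ^ (-q) * M ^ (-q) :=
    hδ.trans (le_mul_of_one_le_left (by positivity)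
      (one_le_rpow_of_pos_of_le_one_of_nonpos hv hv1 (by linarith)))
  have hqM' : 0 ≤ 1 - q / M := by rw [sub_nonneg, div_le_one hM0]; exact hqM
  have hbernoulli := sub_one_rpow_mul_one_sub_div_le hq.le (by linarith : 1 < M)
  rw [hcoef, hpow]
  calc (1 - q / M) * x + B * (q ^ q * (v ^ (-q) * M ^ (-q))) + δ
      ≤ (1 - q / M) * (C * v ^ (-q) * (M - 1) ^ (1 - q))
          + B * (q ^ q * (v ^ (-q) * M ^ (-q))) + v ^ (-q) * M ^ (-q) := by gcongr
    _ = v ^ (-q) * (C * ((M - 1) ^ (1 - q) * (1 - q / M)) + (B * q ^ q + 1) * M ^ (-q)) := by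
        ring
    _ ≤ v ^ (-q) * (C * (M ^ (1 - q) - M ^ (-q)) + C * M ^ (-q)) := by gcongr
    _ = C * v ^ (-q) * M ^ (1 - q) := by ring

theorem le_mul_rpow_one_sub_of_step {q B v δ C : ℝ} {a : ℕ → ℝ} {N : ℕ} (hq : 1 < q)
    (hv : 0 < v) (hv1 : v ≤ 1) (hC0 : 0 ≤ C) (hCa : q ^ q * (a 0 + 1) ≤ C)
    (hCB : B * q ^ q + 1 ≤ C) (hδ : ∀ m, 1 ≤ m → m ≤ N → δ ≤ (m : ℝ) ^ (-q))
    (hstep : ∀ m, 1 ≤ m → m ≤ N → ∀ l ∈ Icc (0 : ℝ) 1,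
      a m ≤ (1 - l * v) * a (m - 1) + B * l ^ q + δ) :
    ∀ m, 1 ≤ m → m ≤ N → a m ≤ C * v ^ (-q) * (m : ℝ) ^ (1 - q) := by
  have hq0 : 0 < q := by linarith
  have hbound : ∀ m, 1 ≤ m → m ≤ N → a m ≤ a 0 + 1 := by
    intro m h1 hN
    have hm : (1 : ℝ) ≤ m := by exact_mod_cast h1
    have hmδ : m * δ ≤ 1 :=
      calc m * δ ≤ m * (m : ℝ) ^ (-1 : ℝ) := by
            gcongr
            exact (hδ m h1 hN).trans (rpow_le_rpow_of_exponent_le hm (by linarith))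
        _ = 1 := by rw [rpow_neg_one, mul_inv_cancel₀ (by positivity)]
    have := le_add_mul_of_le_pred_add (fun k h1 hk => by
      simpa [zero_rpow hq0.ne'] using hstep k h1 hk 0 ⟨le_rfl, zero_le_one⟩) m hN
    linarith
  intro m
  induction m using Nat.strong_induction_on with
  | _ m ih =>
    intro h1 hN
    have hm : (1 : ℝ) ≤ m := by exact_mod_cast h1
    rcases le_or_gt (v * m) q with hsmall | hlarge
    · calc a m ≤ a 0 + 1 := hbound m h1 hN
        _ ≤ C * q ^ (-q) := by
            rw [rpow_neg hq0.le, ← div_eq_mul_inv, le_div_iff₀ (by positivity)]; linarith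
        _ ≤ C * v ^ (-q) * m ^ (1 - q) := by
            rw [mul_assoc]
            gcongr
            exact rpow_neg_le_rpow_neg_mul_rpow_one_sub hq0.le hv hm hsmall
    · have h2 : 2 ≤ m := by
        have : (1 : ℝ) < m := by nlinarith
        exact_mod_cast this
      have hIH := ih (m - 1) (by omega) (by omega) (by omega)
      rw [Nat.cast_sub h1, Nat.cast_one] at hIH
      have hl : q / (v * m) ∈ Icc (0 : ℝ) 1 :=
        ⟨by positivity, (div_le_one (by positivity)).2 hlarge.le⟩
      exact (hstep m h1 hN _ hl).trans
        (one_sub_mul_add_le_mul_rpow_one_sub hq hv hv1 hC0 hCB hlarge.le hIH (hδ m h1 hN))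

theorem stmt_7_general (q B a0 : ℝ) (hq1 : 1 < q) :
    ∃ C' : ℝ, 0 < C' ∧
      ∀ (v δ : ℝ) (a : ℕ → ℝ), 0 < v → v ≤ 1 → 0 < δ → δ ≤ 1 →
      a 0 = a0 →
      (∀ m : ℕ, m ≤ Nat.floor (δ ^ (-(1 : ℝ) / q)) → 0 ≤ a m) →
      (∀ m : ℕ, 1 ≤ m → m ≤ Nat.floor (δ ^ (-(1 : ℝ) / q)) →
        a m ≤ a (m - 1) +
          sInf ((fun l : ℝ => -(l * v * a (m - 1)) + B * l ^ q) '' Set.Icc (0 : ℝ) 1) + δ) →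
      ∀ m : ℕ, 1 ≤ m → m ≤ Nat.floor (δ ^ (-(1 : ℝ) / q)) →
        a m ≤ C' * v ^ (-q) * (m : ℝ) ^ (1 - q) := by
  refine ⟨q ^ q * (|a0| + |B| + 1) + 1, by positivity, ?_⟩
  intro v δ a hv hv1 hδ _ ha0 _ hrec
  have hqq : 0 ≤ q ^ q := by positivity
  refine le_mul_rpow_one_sub_of_step hq1 hv hv1 (by positivity) ?_ ?_ (fun m h1 hN => ?_)
    (fun m h1 hN l hl => le_one_sub_mul_add_of_le_add_sInf (by linarith) hl (hrec m h1 hN))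
  · rw [ha0]; nlinarith [le_abs_self a0, abs_nonneg B]
  · nlinarith [le_abs_self B, abs_nonneg a0]
  · exact le_rpow_neg_of_le_rpow_neg_inv hδ (by linarith) (by exact_mod_cast h1)
      ((Nat.cast_le.2 hN).trans (Nat.floor_le (by positivity)))

theorem stmt_7 (q B a0 : ℝ) (hq1 : 1 < q) (hq2 : q ≤ 2) (hB : 0 < B) :
    ∃ C' : ℝ, 0 < C' ∧
      ∀ (v δ : ℝ) (a : ℕ → ℝ), 0 < v → v ≤ 1 → 0 < δ → δ ≤ 1 →
      a 0 = a0 →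
      (∀ m : ℕ, m ≤ Nat.floor (δ ^ (-(1 : ℝ) / q)) → 0 ≤ a m) →
      (∀ m : ℕ, 1 ≤ m → m ≤ Nat.floor (δ ^ (-(1 : ℝ) / q)) →
        a m ≤ a (m - 1) +
          sInf ((fun l : ℝ => -(l * v * a (m - 1)) + B * l ^ q) '' Set.Icc (0 : ℝ) 1) + δ) →
      ∀ m : ℕ, 1 ≤ m → m ≤ Nat.floor (δ ^ (-(1 : ℝ) / q)) →
        a m ≤ C' * v ^ (-q) * (m : ℝ) ^ (1 - q) :=
  stmt_7_general q B a0 hq1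
end

section
/- Let $\rho : [0,1] \to [0,\infty)$ be a non-negative convex function with $\rho(u)/u \to 0$ as $u \to 0^+$, and let $\{\delta_k\}$ be a non-negative sequence with $\delta_k \to 0$. Suppose a non-negative sequence $\{a_k\}_{k=0}^\infty$ satisfies $a_m \le a_{m-1} + \inf_{0 \le \lambda \le 1}(-\lambda v a_{m-1} + B\rho(\lambda)) + \delta_{m-1}$ for all $m \ge 1$, with positive constants $v$ and $B$. Then $\lim_{m \to \infty} a_m = 0$. -/
/-!
Fix `ε > 0`. Since `ρ(λ) = o(λ)`, some `λ ∈ (0, 1]` with `λ v ≤ 1` has `B ρ(λ) ≤ λ v ε / 4`;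
evaluating the infimum at this `λ` turns the recursion into the affine contraction
`a (m + 1) ≤ (1 - λ v) a m + B ρ(λ) + δ m`, whose perturbation is eventually at most `λ v ε / 2`.
While `a m ≥ ε` such a contraction lowers `a` by at least `λ v ε / 2` per step, so by
nonnegativity `a` drops below `ε` at some late time, and from then on it stays below `ε`.
-/

open Filter Set Topology

theorem Nat.eventually_atTop_of_frequently_of_imp_succ {p : ℕ → Prop}
    (hfreq : ∃ᶠ n in atTop, p n) (hstep : ∀ᶠ n in atTop, p n → p (n + 1)) :
    ∀ᶠ n in atTop, p n := by
  obtain ⟨N, hN⟩ := eventually_atTop.1 hstep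
  obtain ⟨M, hNM, hM⟩ := hfreq.forall_exists_of_atTop N
  exact eventually_atTop.2 ⟨M, fun n hn =>
    Nat.le_induction hM (fun k hk ih => hN k (hNM.trans hk) ih) n hn⟩

theorem frequently_lt_of_eventually_le_sub {a : ℕ → ℝ} (ha : ∀ n, 0 ≤ a n) {d ε : ℝ}
    (hd : 0 < d) (hdec : ∀ᶠ n in atTop, ε ≤ a n → a (n + 1) ≤ a n - d) :
    ∃ᶠ n in atTop, a n < ε := by
  by_contra hcon
  simp only [not_frequently, not_lt] at hcon
  obtain ⟨N, hN⟩ := eventually_atTop.1 (hdec.and hcon)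
  have hdrop : ∀ k : ℕ, a (N + k) ≤ a N - k * d := by
    intro k
    induction k with
    | zero => simp
    | succ k ih =>
      have := (hN (N + k) (by omega)).1 (hN (N + k) (by omega)).2
      rw [← add_assoc]
      push_cast
      linarith
  obtain ⟨k, hk⟩ := exists_nat_gt (a N / d)
  have := hdrop k
  have := ha (N + k)
  have := (div_lt_iff₀ hd).1 hk
  linarith

theorem eventually_lt_of_le_one_sub_mul_add {a c : ℕ → ℝ} (ha : ∀ n, 0 ≤ a n) {θ ε : ℝ}
    (hθ : 0 < θ) (hθ1 : θ ≤ 1) (hε : 0 < ε) (hrec : ∀ n, a (n + 1) ≤ (1 - θ) * a n + c n)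
    (hc : ∀ᶠ n in atTop, c n ≤ θ * ε / 2) :
    ∀ᶠ n in atTop, a n < ε := by
  refine Nat.eventually_atTop_of_frequently_of_imp_succ ?_ ?_
  · refine frequently_lt_of_eventually_le_sub ha (d := θ * ε / 2) (by positivity) ?_
    filter_upwards [hc] with n hcn hεn
    nlinarith [hrec n]
  · filter_upwards [hc] with n hcn hεn
    nlinarith [hrec n]

theorem eventually_le_mul_of_tendsto_div {ρ : ℝ → ℝ}
    (hρ : Tendsto (fun u => ρ u / u) (𝓝[>] 0) (𝓝 0)) {c : ℝ} (hc : 0 < c) :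
    ∀ᶠ u in 𝓝[>] 0, ρ u ≤ c * u := by
  filter_upwards [hρ.eventually (eventually_le_nhds hc), self_mem_nhdsWithin] with u hu hu0
  exact (div_le_iff₀ hu0).1 hu

theorem bddBelow_image_Icc_neg_mul_add {ρ : ℝ → ℝ} (hρ : ∀ u ∈ Icc (0 : ℝ) 1, 0 ≤ ρ u)
    {v B x : ℝ} (hv : 0 ≤ v) (hB : 0 ≤ B) (hx : 0 ≤ x) :
    BddBelow ((fun l : ℝ => -(l * v * x) + B * ρ l) '' Icc 0 1) := by
  refine ⟨-(v * x), ?_⟩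
  rintro _ ⟨l, hl, rfl⟩
  have : l * v * x ≤ v * x := by nlinarith [mul_nonneg hv hx, hl.2]
  nlinarith [mul_nonneg hB (hρ l hl)]

theorem stmt_8_general (ρ : ℝ → ℝ) (hρnn : ∀ u ∈ Set.Icc (0 : ℝ) 1, 0 ≤ ρ u)
    (hρo : Filter.Tendsto (fun u => ρ u / u) (nhdsWithin 0 (Set.Ioi 0)) (nhds 0))
    (δ : ℕ → ℝ) (hδ0 : Filter.Tendsto δ Filter.atTop (nhds 0))
    (v B : ℝ) (hv : 0 < v) (hB : 0 < B)
    (a : ℕ → ℝ) (hann : ∀ k, 0 ≤ a k)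
    (hrec : ∀ m : ℕ, 1 ≤ m →
      a m ≤ a (m - 1) +
        sInf ((fun l : ℝ => -(l * v * a (m - 1)) + B * ρ l) '' Set.Icc (0 : ℝ) 1) + δ (m - 1)) :
    Filter.Tendsto a Filter.atTop (nhds 0) := by
  refine tendsto_order.2 ⟨fun b hb => .of_forall fun n => hb.trans_le (hann n), fun ε hε => ?_⟩
  have hsmall : ∀ᶠ l in 𝓝[>] 0, l ∈ Ioo 0 (min 1 v⁻¹) ∧ ρ l ≤ v * ε / (4 * B) * l := by
    filter_upwards [Ioo_mem_nhdsGT (by positivity : (0 : ℝ) < min 1 v⁻¹),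
      eventually_le_mul_of_tendsto_div hρo (by positivity : 0 < v * ε / (4 * B))] with l hl hρl
    exact ⟨hl, hρl⟩
  obtain ⟨l, ⟨hl0, hl⟩, hρl⟩ := hsmall.exists
  have hl1 : l ≤ 1 := hl.le.trans (min_le_left _ _)
  have hlv : l * v ≤ 1 :=
    (le_inv_mul_iff₀' hv).1 (by rw [mul_one]; exact hl.le.trans (min_le_right _ _))
  have hBρ : B * ρ l ≤ l * v * ε / 4 := by
    calc B * ρ l ≤ B * (v * ε / (4 * B) * l) := by gcongr
      _ = l * v * ε / 4 := by field_simp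
  have hstep (n : ℕ) : a (n + 1) ≤ (1 - l * v) * a n + (B * ρ l + δ n) := by
    have hinf := csInf_le (bddBelow_image_Icc_neg_mul_add hρnn hv.le hB.le (hann n))
      (mem_image_of_mem _ ⟨hl0.le, hl1⟩)
    have := hrec (n + 1) (by omega)
    simp only [Nat.add_sub_cancel] at this
    linarith
  refine eventually_lt_of_le_one_sub_mul_add hann (by positivity) hlv hε hstep ?_
  filter_upwards [hδ0.eventually (eventually_le_nhds (by positivity : 0 < l * v * ε / 4))]
    with n hn
  linarith

theorem stmt_8 (ρ : ℝ → ℝ) (hρnn : ∀ u ∈ Set.Icc (0 : ℝ) 1, 0 ≤ ρ u)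
    (hρconv : ConvexOn ℝ (Set.Icc 0 1) ρ)
    (hρo : Filter.Tendsto (fun u => ρ u / u) (nhdsWithin 0 (Set.Ioi 0)) (nhds 0))
    (δ : ℕ → ℝ) (hδnn : ∀ k, 0 ≤ δ k) (hδ0 : Filter.Tendsto δ Filter.atTop (nhds 0))
    (v B : ℝ) (hv : 0 < v) (hB : 0 < B)
    (a : ℕ → ℝ) (hann : ∀ k, 0 ≤ a k)
    (hrec : ∀ m : ℕ, 1 ≤ m →
      a m ≤ a (m - 1) +
        sInf ((fun l : ℝ => -(l * v * a (m - 1)) + B * ρ l) '' Set.Icc (0 : ℝ) 1) + δ (m - 1)) :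
    Filter.Tendsto a Filter.atTop (nhds 0) :=
  stmt_8_general ρ hρnn hρo δ hδ0 v B hv hB a hann hrec
end

section
/- Let $q \in (1,2]$, $v \in (0,1]$, $B > 0$, $c > 0$. Suppose a non-negative sequence $\{a_m\}_{m=0}^\infty$ satisfies for all $m \ge 1$: $a_m \le a_{m-1} + \inf_{0 \le \lambda \le 1}(-\lambda v a_{m-1} + B\lambda^q) + \delta_{m-1}$, where $0 \le \delta_{m-1} \le c\, m^{-q}$. Then $a_m \le C(q, v, B, a_0, c)\, m^{1-q}$ for all $m \ge 1$, with $C(q,v,B,a_0,c) \le C'(q,B,a_0,c)\, v^{-q}$. -/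
/-!
Taking `λ = 0` gives `a (m+1) ≤ a m + δ m`, so `a` stays below `a 0 + c q / (q - 1)`: the
perturbations `c k^(-q)` telescope against the tail `c / (q - 1) · k^(1-q)`. This settles the
range `m v ≤ q + 1`, where `v^(-q) m^(1-q) ≥ 1 / (q + 1)`. Beyond it, `λ = q / (v m) ∈ [0, 1]`
turns the recursion into `a (m+1) ≤ (1 - q/m) a m + (B q^q + c) v^(-q) m^(-q)`, and the convexity
bound `m^(1-q) - (m+1)^(1-q) ≤ (q - 1) m^(-q)` carries `a m ≤ C v^(-q) m^(1-q)` from `m` to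
`m + 1` once `C ≥ B q^q + c`.
-/

open Real Set

theorem one_add_mul_self_le_rpow_one_add_of_nonpos {s : ℝ} (hs : -1 < s) {p : ℝ} (hp : p ≤ 0) :
    1 + p * s ≤ (1 + s) ^ p := by
  have hs1 : 0 < 1 + s := by linarith
  calc 1 + p * s ≤ p * log (1 + s) + 1 := by
        nlinarith [log_le_sub_one_of_pos hs1]
    _ ≤ exp (p * log (1 + s)) := add_one_le_exp _
    _ = (1 + s) ^ p := by rw [rpow_def_of_pos hs1, mul_comm]

theorem rpow_add_mul_sub_le_rpow_of_nonpos {p x y : ℝ} (hp : p ≤ 0) (hx : 0 < x) (hy : 0 < y) :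
    x ^ p + p * x ^ (p - 1) * (y - x) ≤ y ^ p := by
  have hs : -1 < (y - x) / x := by rw [lt_div_iff₀ hx]; linarith
  calc x ^ p + p * x ^ (p - 1) * (y - x) = x ^ p * (1 + p * ((y - x) / x)) := by
        rw [rpow_sub_one hx.ne']; field_simp
    _ ≤ x ^ p * (1 + (y - x) / x) ^ p := by
        gcongr; exact one_add_mul_self_le_rpow_one_add_of_nonpos hs hp
    _ = y ^ p := by
        rw [← mul_rpow hx.le (by linarith), mul_add, mul_div_cancel₀ _ hx.ne']; ring_nf

theorem le_add_mul_div_of_le_add_rpow_neg {a : ℕ → ℝ} {q c : ℝ} (hq : 1 < q) (hc : 0 ≤ c)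
    (h : ∀ m : ℕ, a (m + 1) ≤ a m + c * ((m : ℝ) + 1) ^ (-q)) (m : ℕ) :
    a m ≤ a 0 + c * q / (q - 1) := by
  have hq' : 0 < q - 1 := sub_pos.2 hq
  have potential : ∀ m : ℕ,
      a (m + 1) + c / (q - 1) * ((m : ℝ) + 1) ^ (1 - q) ≤ a 0 + c * q / (q - 1) := by
    intro m
    induction m with
    | zero =>
      have h0 := h 0
      have e : c / (q - 1) + c = c * q / (q - 1) := by field_simp; ring
      simp only [Nat.cast_zero, zero_add, one_rpow, mul_one] at h0 ⊢
      linarith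
    | succ m ih =>
      have tangent := rpow_add_mul_sub_le_rpow_of_nonpos (p := 1 - q) (x := (m : ℝ) + 1 + 1)
        (y := (m : ℝ) + 1) (by linarith) (by positivity) (by positivity)
      rw [show 1 - q - 1 = -q by ring] at tangent
      have decrement : c * ((m : ℝ) + 1 + 1) ^ (-q) + c / (q - 1) * ((m : ℝ) + 1 + 1) ^ (1 - q)
          ≤ c / (q - 1) * ((m : ℝ) + 1) ^ (1 - q) := by
        have e : c * ((m : ℝ) + 1 + 1) ^ (-q)
            = c / (q - 1) * ((q - 1) * ((m : ℝ) + 1 + 1) ^ (-q)) := by field_simp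
        rw [e, ← mul_add]
        gcongr
        linarith
      have hm := h (m + 1)
      push_cast at hm ⊢
      linarith
  cases m with
  | zero =>
    have : 0 ≤ c * q / (q - 1) := by positivity
    linarith
  | succ m =>
    have : 0 ≤ c / (q - 1) * ((m : ℝ) + 1) ^ (1 - q) := by positivity
    linarith [potential m]

theorem one_le_mul_rpow_neg_mul_rpow_one_sub {q v m K : ℝ} (hq1 : 1 ≤ q) (hq2 : q ≤ 2)
    (hv0 : 0 < v) (hv1 : v ≤ 1) (hm : 1 ≤ m) (hK : m * v ≤ K) :
    1 ≤ K * v ^ (-q) * m ^ (1 - q) := by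
  have hm0 : 0 < m := by linarith
  calc (1 : ℝ) ≤ v ^ (1 - q) * m ^ (2 - q) :=
        one_le_mul_of_one_le_of_one_le
          (one_le_rpow_of_pos_of_le_one_of_nonpos hv0 hv1 (by linarith))
          (one_le_rpow hm (by linarith))
    _ = m * v * v ^ (-q) * m ^ (1 - q) := by
        rw [show 1 - q = -q + 1 by ring, show 2 - q = -q + 1 + 1 by ring,
          rpow_add_one hv0.ne', rpow_add_one hm0.ne', rpow_add_one hm0.ne']
        ring
    _ ≤ K * v ^ (-q) * m ^ (1 - q) := by gcongr

theorem le_mul_rpow_succ_of_le_mul_rpow {q v B c C m x y : ℝ} (hq : 1 < q) (hv0 : 0 < v)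
    (hv1 : v ≤ 1) (hB : 0 ≤ B) (hc : 0 ≤ c) (hmv : q ≤ m * v)
    (hx : x ≤ C * v ^ (-q) * m ^ (1 - q)) (hC : B * q ^ q + c ≤ C)
    (hy : y ≤ (1 - q / (v * m) * v) * x + B * (q / (v * m)) ^ q + c * (m + 1) ^ (-q)) :
    y ≤ C * v ^ (-q) * (m + 1) ^ (1 - q) := by
  have hm0 : 0 < m := pos_of_mul_pos_left (by linarith) hv0.le
  have hqm : q ≤ m := by nlinarith
  have hC0 : 0 ≤ C := le_trans (by positivity) hC
  set w := v ^ (-q) * m ^ (-q) with hw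
  have hw0 : 0 ≤ w := by positivity
  have e_m : m ^ (1 - q) = m * m ^ (-q) := by
    rw [show 1 - q = -q + 1 by ring, rpow_add_one hm0.ne', mul_comm]
  have e_lv : q / (v * m) * v = q / m := by field_simp
  have e_lq : (q / (v * m)) ^ q = q ^ q * w := by
    rw [div_rpow (by linarith) (by positivity), mul_rpow hv0.le hm0.le, hw,
      rpow_neg hv0.le, rpow_neg hm0.le]
    ring
  have hdecay : (m + 1) ^ (-q) ≤ w := calc
    (m + 1) ^ (-q) ≤ m ^ (-q) := rpow_le_rpow_of_nonpos hm0 (by linarith) (by linarith)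
    _ = 1 * m ^ (-q) := (one_mul _).symm
    _ ≤ w := by rw [hw]; gcongr; exact one_le_rpow_of_pos_of_le_one_of_nonpos hv0 hv1 (by linarith)
  have tangent := rpow_add_mul_sub_le_rpow_of_nonpos (p := 1 - q) (x := m) (y := m + 1)
    (by linarith) hm0 (by linarith)
  rw [show 1 - q - 1 = -q by ring, add_sub_cancel_left, mul_one] at tangent
  calc y ≤ (1 - q / m) * (C * v ^ (-q) * m ^ (1 - q)) + B * (q ^ q * w) + c * w := by
        rw [e_lv, e_lq] at hy
        have : 0 ≤ 1 - q / m := by rw [sub_nonneg, div_le_one hm0]; exact hqm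
        have := mul_le_mul_of_nonneg_left hx this
        have := mul_le_mul_of_nonneg_left hdecay hc
        linarith
    _ = C * v ^ (-q) * (m ^ (1 - q) + (1 - q) * m ^ (-q)) + (B * q ^ q + c - C) * w := by
        rw [e_m, hw]; field_simp; ring
    _ ≤ C * v ^ (-q) * (m + 1) ^ (1 - q) + 0 :=
        add_le_add (mul_le_mul_of_nonneg_left tangent (by positivity))
          (mul_nonpos_of_nonpos_of_nonneg (by linarith) hw0)
    _ = C * v ^ (-q) * (m + 1) ^ (1 - q) := add_zero _

theorem le_mul_rpow_of_le_step {q v B c C : ℝ} {a : ℕ → ℝ} (hq1 : 1 < q) (hq2 : q ≤ 2)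
    (hv0 : 0 < v) (hv1 : v ≤ 1) (hB : 0 ≤ B) (hc : 0 ≤ c) (ha0 : 0 ≤ a 0)
    (hstep : ∀ (m : ℕ), ∀ l ∈ Icc (0 : ℝ) 1,
      a (m + 1) ≤ (1 - l * v) * a m + B * l ^ q + c * ((m : ℝ) + 1) ^ (-q))
    (hC : (q + 1) * (a 0 + c * q / (q - 1)) + B * q ^ q + c ≤ C) (m : ℕ) (hm : 1 ≤ m) :
    a m ≤ C * v ^ (-q) * (m : ℝ) ^ (1 - q) := by
  have hq' : 0 < q - 1 := sub_pos.2 hq1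
  have bounded : ∀ m, a m ≤ a 0 + c * q / (q - 1) :=
    le_add_mul_div_of_le_add_rpow_neg hq1 hc fun m => by
      simpa [zero_rpow (by linarith : q ≠ 0)] using hstep m 0 ⟨le_rfl, zero_le_one⟩
  have small : ∀ m : ℕ, 1 ≤ m → (m : ℝ) * v ≤ q + 1 →
      a m ≤ C * v ^ (-q) * (m : ℝ) ^ (1 - q) := by
    intro m hm hmv
    have hA : 0 ≤ a 0 + c * q / (q - 1) := by positivity
    have hKA : (q + 1) * (a 0 + c * q / (q - 1)) ≤ C := by
      have : 0 ≤ B * q ^ q := by positivity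
      linarith
    calc a m ≤ a 0 + c * q / (q - 1) := bounded m
      _ ≤ (a 0 + c * q / (q - 1)) * ((q + 1) * v ^ (-q) * (m : ℝ) ^ (1 - q)) :=
          le_mul_of_one_le_right hA <| one_le_mul_rpow_neg_mul_rpow_one_sub hq1.le hq2 hv0 hv1
            (by exact_mod_cast hm) hmv
      _ = (q + 1) * (a 0 + c * q / (q - 1)) * (v ^ (-q) * (m : ℝ) ^ (1 - q)) := by ring
      _ ≤ C * (v ^ (-q) * (m : ℝ) ^ (1 - q)) := by gcongr
      _ = C * v ^ (-q) * (m : ℝ) ^ (1 - q) := by ring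
  induction m, hm using Nat.le_induction with
  | base => exact small 1 le_rfl (by push_cast; linarith)
  | succ m hm ih =>
    by_cases hmv : q ≤ m * v
    · have hm0 : (0 : ℝ) < m := by exact_mod_cast hm
      have hl1 : q / (v * m) ≤ 1 := by
        rw [div_le_one (by positivity)]; linarith
      push_cast
      refine le_mul_rpow_succ_of_le_mul_rpow hq1 hv0 hv1 hB hc hmv ih ?_
        (hstep m _ ⟨by positivity, hl1⟩)
      have : 0 ≤ (q + 1) * (a 0 + c * q / (q - 1)) := by positivity
      linarith
    · exact small (m + 1) (by omega) (by push_cast; nlinarith)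

theorem stmt_9 (q B a0 c : ℝ) (hq1 : 1 < q) (hq2 : q ≤ 2) (hB : 0 < B) (hc : 0 < c) :
    ∃ C' : ℝ, 0 < C' ∧
      ∀ (v : ℝ) (δ : ℕ → ℝ) (a : ℕ → ℝ), 0 < v → v ≤ 1 →
      a 0 = a0 →
      (∀ k, 0 ≤ δ k) →
      (∀ m : ℕ, 1 ≤ m → δ (m - 1) ≤ c * (m : ℝ) ^ (-q)) →
      (∀ m, 0 ≤ a m) →
      (∀ m : ℕ, 1 ≤ m →
        a m ≤ a (m - 1) +
          sInf ((fun l : ℝ => -(l * v * a (m - 1)) + B * l ^ q) '' Set.Icc (0 : ℝ) 1) +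
          δ (m - 1)) →
      ∀ m : ℕ, 1 ≤ m → a m ≤ C' * v ^ (-q) * (m : ℝ) ^ (1 - q) := by
  have hq' : 0 < q - 1 := sub_pos.2 hq1
  refine ⟨(q + 1) * (|a0| + c * q / (q - 1)) + B * q ^ q + c, by positivity, ?_⟩
  intro v δ a hv0 hv1 ha0 _ hδ ha hrec
  refine le_mul_rpow_of_le_step hq1 hq2 hv0 hv1 hB.le hc.le (ha 0) (fun m l hl => ?_) ?_
  · have hm := hrec (m + 1) m.succ_pos
    have hδm := hδ (m + 1) m.succ_pos
    simp only [Nat.add_sub_cancel, Nat.cast_add, Nat.cast_one] at hm hδm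
    have hInf : sInf ((fun l : ℝ => -(l * v * a m) + B * l ^ q) '' Icc (0 : ℝ) 1)
        ≤ -(l * v * a m) + B * l ^ q :=
      csInf_le (isCompact_Icc.bddBelow_image (by fun_prop (disch := positivity)))
        (mem_image_of_mem _ hl)
    linarith
  · rw [ha0]
    gcongr
    exact le_abs_self a0
end

section
/- Let $q \in (1,2]$, $p = q/(q-1)$, $w \in (0,1]$, $c > 0$. Assume $\{\delta_k\}_{k=0}^\infty$ satisfies $0 \le \delta_k \le c(k+1)^{-q}$ and a non-negative sequence $\{a_k\}_{k=0}^\infty$ satisfies $a_m \le a_{m-1} - w a_{m-1}^p + \delta_{m-1}$ for all $m \ge 1$. Then $a_m \le C(q,c,w,a_0)\, m^{1-q}$ for all $m \ge 1$, where $C(q,c,w,a_0) \le C'(q,c,a_0)\, w^{-1/(p-1)}$. -/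
/-!
Rescaling `b m = w ^ (1 / (p - 1)) * a m` turns the recursion into the same one with `w = 1`
and smaller noise, so it suffices to treat `w = 1`. The map `x ↦ x - x ^ p` increases on
`[0, T]`, `p * T ^ (p - 1) = 1`, and attains its maximum at `T`; hence `b m ≤ T + c` for all
`m ≥ 1`. From an index `N ≥ q + c p / T` on, `b` stays below `u n = T (N / n) ^ (q - 1)`:
`b N ≤ T = u N` because the noise at `N` is below `T / p`, and afterwards the decrement
`u n - u (n + 1)` plus the noise, both `O(n ^ (-q))`, are dominated by `u n ^ p`, which is of
order `n ^ (-q)` because `(1 - q) p = -q`. Monotonicity of `x - x ^ p` and the decrement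
bound both come from Bernoulli's inequality.
-/

open Real

lemma rpow_add_mul_sub_le_rpow {p u x : ℝ} (hp : 1 ≤ p) (hu : 0 < u) (hx : 0 ≤ x) :
    u ^ p + p * u ^ (p - 1) * (x - u) ≤ x ^ p := by
  have hbern := one_add_mul_self_le_rpow_one_add (s := x / u - 1)
    (by linarith [div_nonneg hx hu.le]) hp
  rw [add_sub_cancel, div_rpow hx hu.le, le_div_iff₀ (rpow_pos_of_pos hu p)] at hbern
  calc u ^ p + p * u ^ (p - 1) * (x - u) = (1 + p * (x / u - 1)) * u ^ p := by
        rw [rpow_sub_one hu.ne']; field_simp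
    _ ≤ x ^ p := hbern

lemma sub_rpow_le_sub_rpow_of_le {p x u : ℝ} (hp : 1 ≤ p) (hx : 0 ≤ x) (hxu : x ≤ u)
    (hu : 0 < u) (hpu : p * u ^ (p - 1) ≤ 1) : x - x ^ p ≤ u - u ^ p := by
  linarith [rpow_add_mul_sub_le_rpow hp hu hx,
    mul_nonneg (sub_nonneg.2 hpu) (sub_nonneg.2 hxu)]

lemma sub_rpow_le_sub_rpow_of_mul_rpow_eq_one {p x T : ℝ} (hp : 1 ≤ p) (hx : 0 ≤ x)
    (hT : 0 < T) (hpT : p * T ^ (p - 1) = 1) : x - x ^ p ≤ T - T ^ p := by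
  have := rpow_add_mul_sub_le_rpow hp hT hx
  rw [hpT] at this
  linarith

lemma rpow_one_sub_sub_rpow_one_sub_succ_le {q x : ℝ} (hq : 1 ≤ q) (hx : 0 < x) :
    x ^ (1 - q) - (x + 1) ^ (1 - q) ≤ (q - 1) * x ^ (-q) := by
  have hx1 : 0 < x + 1 := by linarith
  have hA : x ^ (-q) * x ^ q = 1 := by rw [← rpow_add hx]; simp
  have hB : (x + 1) ^ (1 - q) * (x + 1) ^ (q - 1) = 1 := by rw [← rpow_add hx1]; simp
  have hxA : x ^ (1 - q) = x * x ^ (-q) := by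
    rw [sub_eq_add_neg, rpow_add hx, rpow_one]
  have htangent : (x + 1) ^ (q - 1) * (x + 1 - q) ≤ x ^ q := by
    have hsplit : (x + 1) ^ q = (x + 1) ^ (q - 1) * (x + 1) := by
      rw [rpow_sub_one hx1.ne', div_mul_cancel₀ _ hx1.ne']
    linarith [rpow_add_mul_sub_le_rpow hq hx1 hx.le]
  have key : x ^ (-q) * (x + 1 - q) ≤ (x + 1) ^ (1 - q) :=
    calc x ^ (-q) * (x + 1 - q)
        = x ^ (-q) * (x + 1) ^ (1 - q) * ((x + 1) ^ (q - 1) * (x + 1 - q)) := by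
          linear_combination (-(x ^ (-q) * (x + 1 - q))) * hB
      _ ≤ x ^ (-q) * (x + 1) ^ (1 - q) * x ^ q := by gcongr
      _ = (x + 1) ^ (1 - q) := by linear_combination (x + 1) ^ (1 - q) * hA
  rw [hxA]
  linarith

section Recursion

variable {p q c : ℝ} {b δ : ℕ → ℝ}

lemma le_of_le_sub_rpow_add_of_supersolution (hp : 1 ≤ p) {u : ℕ → ℝ} {n₀ : ℕ}
    (hb : ∀ n, 0 ≤ b n) (hrec : ∀ n, b (n + 1) ≤ b n - b n ^ p + δ n)
    (hu : ∀ n, n₀ ≤ n → 0 < u n ∧ p * u n ^ (p - 1) ≤ 1)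
    (hsuper : ∀ n, n₀ ≤ n → u n - u n ^ p + δ n ≤ u (n + 1))
    (h₀ : b n₀ ≤ u n₀) : ∀ n, n₀ ≤ n → b n ≤ u n := by
  intro n hn
  induction n, hn using Nat.le_induction with
  | base => exact h₀
  | succ n hn ih =>
    obtain ⟨hun, hpu⟩ := hu n hn
    have := sub_rpow_le_sub_rpow_of_le hp (hb n) ih hun hpu
    linarith [hrec n, hsuper n hn]

lemma le_sub_rpow_add_of_mul_rpow_eq_one (hp : 1 ≤ p) {T : ℝ} (hT : 0 < T)
    (hpT : p * T ^ (p - 1) = 1) (hb : ∀ n, 0 ≤ b n)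
    (hrec : ∀ n, b (n + 1) ≤ b n - b n ^ p + δ n) (n : ℕ) :
    b (n + 1) ≤ T - T ^ p + δ n := by
  linarith [hrec n, sub_rpow_le_sub_rpow_of_mul_rpow_eq_one hp (hb n) hT hpT]

lemma mul_rpow_one_sub_supersolution (hqp : q.HolderConjugate p) (hc : 0 ≤ c) {C : ℝ}
    (hC : 0 < C) (hCp : (q - 1) * C + c ≤ C ^ p)
    (hδ : ∀ k : ℕ, δ k ≤ c * ((k : ℝ) + 1) ^ (-q)) {n : ℕ} (hn : 1 ≤ n) :
    C * (n : ℝ) ^ (1 - q) - (C * (n : ℝ) ^ (1 - q)) ^ p + δ n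
      ≤ C * ((n + 1 : ℕ) : ℝ) ^ (1 - q) := by
  have hq : 1 < q := hqp.lt
  have hx : (0 : ℝ) < n := by exact_mod_cast hn
  have hpow : (C * (n : ℝ) ^ (1 - q)) ^ p = C ^ p * (n : ℝ) ^ (-q) := by
    rw [mul_rpow hC.le (rpow_nonneg hx.le _), ← rpow_mul hx.le,
      show (1 - q) * p = -q by linear_combination -hqp.mul_eq_add]
  have hδn : δ n ≤ c * (n : ℝ) ^ (-q) :=
    (hδ n).trans <| mul_le_mul_of_nonneg_left
      (rpow_le_rpow_of_nonpos hx (by linarith) (by linarith)) hc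
  have hdiff := mul_le_mul_of_nonneg_left (rpow_one_sub_sub_rpow_one_sub_succ_le hq.le hx) hC.le
  have hCp' := mul_le_mul_of_nonneg_right hCp (rpow_nonneg hx.le (-q))
  push_cast
  rw [hpow]
  linarith

lemma sub_one_mul_add_le_rpow (hqp : q.HolderConjugate p) (hc : 0 ≤ c) {T : ℝ} (hT : 0 < T)
    (hpT : p * T ^ (p - 1) = 1) {N : ℝ} (hN : q + c * p / T ≤ N) :
    (q - 1) * (T * N ^ (q - 1)) + c ≤ (T * N ^ (q - 1)) ^ p := by
  have hq : 1 < q := hqp.lt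
  have hp : 0 < p := hqp.symm.pos
  have hN1 : 1 ≤ N := by linarith [show 0 ≤ c * p / T by positivity]
  set C := T * N ^ (q - 1)
  have hC : 0 < C := by positivity
  have hCp1 : C ^ (p - 1) = N / p := by
    rw [mul_rpow hT.le (by positivity), ← rpow_mul (by positivity),
      show (q - 1) * (p - 1) = 1 by linear_combination hqp.mul_eq_add, rpow_one,
      eq_div_iff hp.ne']
    linear_combination N * hpT
  have hNp : (q - 1) + c / T ≤ N / p := by
    rw [le_div_iff₀ hp, add_mul, div_mul_eq_mul_div]
    linear_combination hN + hqp.mul_eq_add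
  have hc_le : c ≤ C * (c / T) := by
    rw [mul_div_left_comm]
    exact le_mul_of_one_le_right hc <|
      (one_le_div hT).2 (le_mul_of_one_le_right hT.le (one_le_rpow hN1 (by linarith)))
  calc (q - 1) * C + c ≤ C * ((q - 1) + c / T) := by linarith
    _ ≤ C * (N / p) := by gcongr
    _ = C ^ p := by rw [← hCp1, rpow_sub_one hC.ne', mul_div_cancel₀ _ hC.ne']

lemma le_of_le_natCast_of_mul_rpow_eq_one (hqp : q.HolderConjugate p) (hc : 0 ≤ c) {T : ℝ}
    (hT : 0 < T) (hpT : p * T ^ (p - 1) = 1) {N : ℕ} (hN : q + c * p / T ≤ N)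
    (hδ : ∀ k : ℕ, δ k ≤ c * ((k : ℝ) + 1) ^ (-q)) (hb : ∀ n, 0 ≤ b n)
    (hrec : ∀ n, b (n + 1) ≤ b n - b n ^ p + δ n) : b N ≤ T := by
  have hq : 1 < q := hqp.lt
  have hp : 0 < p := hqp.symm.pos
  have hN1 : (1 : ℝ) ≤ N := by linarith [show 0 ≤ c * p / T by positivity]
  have hN0 : 1 ≤ N := by exact_mod_cast hN1
  have hTp : T ^ p = T / p := by
    rw [rpow_sub_one hT.ne', mul_div_assoc', div_eq_one_iff_eq hT.ne'] at hpT
    rw [eq_div_iff hp.ne', mul_comm, hpT]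
  have hδN : δ (N - 1) ≤ c / N :=
    calc δ (N - 1) ≤ c * (N : ℝ) ^ (-q) := by simpa [Nat.cast_sub hN0] using hδ (N - 1)
      _ ≤ c * (N : ℝ) ^ (-1 : ℝ) :=
        mul_le_mul_of_nonneg_left (rpow_le_rpow_of_exponent_le hN1 (by linarith)) hc
      _ = c / N := by rw [rpow_neg_one, div_eq_mul_inv]
  have hcN : c / N ≤ T / p := by
    rw [div_le_div_iff₀ (by linarith) hp]
    linarith [(div_le_iff₀ hT).1 (show c * p / T ≤ N by linarith)]
  have := le_sub_rpow_add_of_mul_rpow_eq_one hqp.symm.lt.le hT hpT hb hrec (N - 1)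
  rw [Nat.sub_add_cancel hN0] at this
  linarith

lemma le_mul_rpow_one_sub_of_le (hqp : q.HolderConjugate p) (hc : 0 ≤ c) {T : ℝ}
    (hT : 0 < T) (hpT : p * T ^ (p - 1) = 1) {N : ℕ} (hN : q + c * p / T ≤ N)
    (hδ : ∀ k : ℕ, δ k ≤ c * ((k : ℝ) + 1) ^ (-q)) (hb : ∀ n, 0 ≤ b n)
    (hrec : ∀ n, b (n + 1) ≤ b n - b n ^ p + δ n) :
    ∀ n, N ≤ n → b n ≤ T * (N : ℝ) ^ (q - 1) * (n : ℝ) ^ (1 - q) := by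
  have hq : 1 < q := hqp.lt
  have hp : 1 < p := hqp.symm.lt
  have hN1 : (1 : ℝ) ≤ N := by linarith [show 0 ≤ c * p / T by positivity]
  have hN0 : 1 ≤ N := by exact_mod_cast hN1
  have hCN : T * (N : ℝ) ^ (q - 1) * (N : ℝ) ^ (1 - q) = T := by
    rw [mul_assoc, ← rpow_add (by linarith)]; simp
  refine le_of_le_sub_rpow_add_of_supersolution
    (u := fun n => T * (N : ℝ) ^ (q - 1) * (n : ℝ) ^ (1 - q)) hp.le hb hrec
    (fun n hn => ?_)
    (fun n hn => mul_rpow_one_sub_supersolution hqp hc (by positivity)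
      (sub_one_mul_add_le_rpow hqp hc hT hpT hN) hδ (hN0.trans hn))
    (by simpa [hCN] using le_of_le_natCast_of_mul_rpow_eq_one hqp hc hT hpT hN hδ hb hrec)
  have hn0 : (0 : ℝ) < n := by exact_mod_cast hN0.trans hn
  have huT : T * (N : ℝ) ^ (q - 1) * (n : ℝ) ^ (1 - q) ≤ T := by
    nth_rw 2 [← hCN]
    exact mul_le_mul_of_nonneg_left
      (rpow_le_rpow_of_nonpos (by linarith) (by exact_mod_cast hn) (by linarith)) (by positivity)
  refine ⟨by positivity, le_of_le_of_eq ?_ hpT⟩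
  exact mul_le_mul_of_nonneg_left (rpow_le_rpow (by positivity) huT (by linarith)) (by linarith)

lemma exists_le_mul_rpow_one_sub (hqp : q.HolderConjugate p) (hc : 0 ≤ c) :
    ∃ C : ℝ, 0 < C ∧ ∀ (δ b : ℕ → ℝ), (∀ k : ℕ, δ k ≤ c * ((k : ℝ) + 1) ^ (-q)) →
      (∀ n, 0 ≤ b n) → (∀ n, b (n + 1) ≤ b n - b n ^ p + δ n) →
      ∀ m : ℕ, 1 ≤ m → b m ≤ C * (m : ℝ) ^ (1 - q) := by
  have hq : 1 < q := hqp.lt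
  have hp : 0 < p := hqp.symm.pos
  set T := p ^ (1 - q)
  have hT : 0 < T := by positivity
  have hpT : p * T ^ (p - 1) = 1 := by
    rw [← rpow_mul hp.le, show (1 - q) * (p - 1) = -1 by linear_combination -hqp.mul_eq_add,
      rpow_neg_one, mul_inv_cancel₀ hp.ne']
  set N := ⌈q + c * p / T⌉₊
  have hN : q + c * p / T ≤ N := Nat.le_ceil _
  refine ⟨(T + c) * (N : ℝ) ^ (q - 1), by positivity, fun δ b hδ hb hrec m hm => ?_⟩
  have hm0 : (0 : ℝ) < m := by exact_mod_cast hm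
  rcases le_or_gt N m with hNm | hmN
  · calc b m ≤ T * (N : ℝ) ^ (q - 1) * (m : ℝ) ^ (1 - q) :=
          le_mul_rpow_one_sub_of_le hqp hc hT hpT hN hδ hb hrec m hNm
      _ ≤ (T + c) * (N : ℝ) ^ (q - 1) * (m : ℝ) ^ (1 - q) := by gcongr; linarith
  · have hδc : δ (m - 1) ≤ c := (hδ _).trans <| mul_le_of_le_one_right hc <|
      rpow_le_one_of_one_le_of_nonpos (by simp) (by linarith)
    have hbm := le_sub_rpow_add_of_mul_rpow_eq_one hqp.symm.lt.le hT hpT hb hrec (m - 1)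
    rw [Nat.sub_add_cancel hm] at hbm
    have hone : 1 ≤ (N : ℝ) ^ (q - 1) * (m : ℝ) ^ (1 - q) := by
      rw [show 1 - q = -(q - 1) by ring, rpow_neg hm0.le, ← div_eq_mul_inv,
        one_le_div₀ (by positivity)]
      exact rpow_le_rpow hm0.le (by exact_mod_cast hmN.le) (by linarith)
    calc b m ≤ (T + c) * 1 := by linarith [rpow_nonneg hT.le p]
      _ ≤ (T + c) * ((N : ℝ) ^ (q - 1) * (m : ℝ) ^ (1 - q)) := by gcongr
      _ = (T + c) * (N : ℝ) ^ (q - 1) * (m : ℝ) ^ (1 - q) := by ring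

end Recursion

lemma rpow_mul_le_sub_rpow_add {p w : ℝ} (hp : 1 < p) (hw : 0 < w) {a δ : ℕ → ℝ}
    (ha : ∀ n, 0 ≤ a n) (hrec : ∀ n, a (n + 1) ≤ a n - w * a n ^ p + δ n) (n : ℕ) :
    w ^ (1 / (p - 1)) * a (n + 1)
      ≤ w ^ (1 / (p - 1)) * a n - (w ^ (1 / (p - 1)) * a n) ^ p + w ^ (1 / (p - 1)) * δ n := by
  have hpow : (w ^ (1 / (p - 1)) * a n) ^ p = w ^ (1 / (p - 1)) * (w * a n ^ p) := by
    rw [mul_rpow (by positivity) (ha n), ← rpow_mul hw.le,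
      show 1 / (p - 1) * p = 1 / (p - 1) + 1 by field_simp [(sub_pos.2 hp).ne']; ring,
      rpow_add hw, rpow_one, mul_assoc]
  rw [hpow]
  linarith [mul_le_mul_of_nonneg_left (hrec n) (rpow_nonneg hw.le (1 / (p - 1)))]

theorem stmt_10_general (q p a0 c : ℝ) (hq1 : 1 < q) (hp : p = q / (q - 1))
    (hc : 0 < c) :
    ∃ C' : ℝ, 0 < C' ∧
      ∀ (w : ℝ) (δ : ℕ → ℝ) (a : ℕ → ℝ), 0 < w → w ≤ 1 →
      a 0 = a0 →
      (∀ k, 0 ≤ δ k) →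
      (∀ k : ℕ, δ k ≤ c * ((k : ℝ) + 1) ^ (-q)) →
      (∀ m, 0 ≤ a m) →
      (∀ m : ℕ, 1 ≤ m → a m ≤ a (m - 1) - w * a (m - 1) ^ p + δ (m - 1)) →
      ∀ m : ℕ, 1 ≤ m → a m ≤ C' * w ^ (-(1 / (p - 1))) * (m : ℝ) ^ (1 - q) := by
  have hqp : q.HolderConjugate p := (holderConjugate_iff_eq_conjExponent hq1).2 hp
  obtain ⟨C, hC, hbound⟩ := exists_le_mul_rpow_one_sub hqp hc.le
  refine ⟨C, hC, fun w δ a hw hw1 _ hδ0 hδ ha hrec m hm => ?_⟩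
  set s := 1 / (p - 1)
  have hws : w ^ s ≤ 1 := rpow_le_one hw.le hw1 (one_div_nonneg.2 hqp.symm.sub_one_pos.le)
  have hrec' : ∀ n, a (n + 1) ≤ a n - w * a n ^ p + δ n := fun n => by
    simpa using hrec (n + 1) (by omega)
  have hbm := hbound (fun k => w ^ s * δ k) (fun n => w ^ s * a n)
    (fun k => (mul_le_of_le_one_left (hδ0 k) hws).trans (hδ k))
    (fun n => mul_nonneg (rpow_nonneg hw.le s) (ha n))
    (rpow_mul_le_sub_rpow_add hqp.symm.lt hw ha hrec') m hm
  calc a m = w ^ (-s) * (w ^ s * a m) := by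
        rw [rpow_neg hw.le, ← mul_assoc, inv_mul_cancel₀ (by positivity), one_mul]
    _ ≤ w ^ (-s) * (C * (m : ℝ) ^ (1 - q)) := by gcongr
    _ = C * w ^ (-s) * (m : ℝ) ^ (1 - q) := by ring

theorem stmt_10 (q p a0 c : ℝ) (hq1 : 1 < q) (hq2 : q ≤ 2) (hp : p = q / (q - 1))
    (hc : 0 < c) :
    ∃ C' : ℝ, 0 < C' ∧
      ∀ (w : ℝ) (δ : ℕ → ℝ) (a : ℕ → ℝ), 0 < w → w ≤ 1 →
      a 0 = a0 →
      (∀ k, 0 ≤ δ k) →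
      (∀ k : ℕ, δ k ≤ c * ((k : ℝ) + 1) ^ (-q)) →
      (∀ m, 0 ≤ a m) →
      (∀ m : ℕ, 1 ≤ m → a m ≤ a (m - 1) - w * a (m - 1) ^ p + δ (m - 1)) →
      ∀ m : ℕ, 1 ≤ m → a m ≤ C' * w ^ (-(1 / (p - 1))) * (m : ℝ) ^ (1 - q) :=
  stmt_10_general q p a0 c hq1 hp hc
end

section
/- Let $0 < \alpha < \beta$ and $A > 0$. Suppose a sequence $\{a_n\}_{n=0}^\infty$ of reals satisfies: $a_0 < A$; for all $n \ge 1$, $a_n \le a_{n-1} + A n^{-\alpha}$; and whenever $a_\nu \ge A\nu^{-\alpha}$ for some $\nu \ge 1$, then $a_{\nu+1} \le a_\nu(1 - \beta/\nu)$. Then there exists a constant $C = C(\alpha,\beta)$ such that $a_n \le C A n^{-\alpha}$ for all $n \ge 1$. -/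
/-! Induction on `n` with `C = 2 ^ α + 2`. If `a n` is below the threshold `A n^{-α}`, one growth
step gives `a (n+1) < A n^{-α} + A (n+1)^{-α} ≤ (2^α + 1) A (n+1)^{-α}`. Otherwise the forced decay
gives `a (n+1) ≤ C A n^{-α} (1 - β/n) ≤ C A n^{-α} (1 - α/n)`, and the Bernoulli-type bound
`1 - α x ≤ (1 + x)^{-α}` turns this into `C A (n+1)^{-α}`. -/

theorem one_sub_mul_le_one_add_rpow_neg {α x : ℝ} (hα : 0 ≤ α) (hx : -1 < x) :
    1 - α * x ≤ (1 + x) ^ (-α) := by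
  have hx' : 0 < 1 + x := by linarith
  have hlog : Real.log (1 + x) ≤ x := by linarith [Real.log_le_sub_one_of_pos hx']
  calc 1 - α * x ≤ Real.exp (-α * x) := by linarith [Real.add_one_le_exp (-α * x)]
    _ ≤ Real.exp (Real.log (1 + x) * -α) := Real.exp_le_exp.2 (by nlinarith)
    _ = (1 + x) ^ (-α) := (Real.rpow_def_of_pos hx' _).symm

theorem rpow_neg_mul_one_sub_div_le {α t : ℝ} (hα : 0 ≤ α) (ht : 0 < t) :
    t ^ (-α) * (1 - α / t) ≤ (t + 1) ^ (-α) := by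
  have hsplit : (t + 1) ^ (-α) = t ^ (-α) * (1 + 1 / t) ^ (-α) := by
    rw [← Real.mul_rpow ht.le (by positivity), mul_add, mul_one_div_cancel ht.ne', mul_one]
  rw [hsplit, div_eq_mul_one_div α t]
  gcongr
  exact one_sub_mul_le_one_add_rpow_neg hα (by linarith [one_div_pos.2 ht])

theorem rpow_neg_le_two_rpow_mul_rpow_neg_add_one {α t : ℝ} (hα : 0 ≤ α) (ht : 1 ≤ t) :
    t ^ (-α) ≤ 2 ^ α * (t + 1) ^ (-α) := by
  have h : (2 * t) ^ (-α) ≤ (t + 1) ^ (-α) :=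
    Real.rpow_le_rpow_of_nonpos (by linarith) (by linarith) (neg_nonpos.2 hα)
  rw [Real.mul_rpow zero_le_two (by linarith), Real.rpow_neg zero_le_two] at h
  have h2 : 0 < (2 : ℝ) ^ α := by positivity
  calc t ^ (-α) = 2 ^ α * ((2 ^ α)⁻¹ * t ^ (-α)) := by field_simp
    _ ≤ 2 ^ α * (t + 1) ^ (-α) := by gcongr

theorem le_mul_rpow_neg_add_one_of_decay {α β K t x y : ℝ} (hα : 0 ≤ α) (hαβ : α ≤ β)
    (ht : 0 < t) (hK : 0 ≤ K) (hx₀ : 0 ≤ x) (hx : x ≤ K * t ^ (-α))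
    (hy : y ≤ x * (1 - β / t)) : y ≤ K * (t + 1) ^ (-α) := by
  rcases le_or_gt (1 - β / t) 0 with hneg | hpos
  · calc y ≤ 0 := hy.trans (mul_nonpos_of_nonneg_of_nonpos hx₀ hneg)
      _ ≤ K * (t + 1) ^ (-α) := by positivity
  · have hαβt : α / t ≤ β / t := by gcongr
    calc y ≤ K * t ^ (-α) * (1 - β / t) := hy.trans (by gcongr)
      _ ≤ K * (t ^ (-α) * (1 - α / t)) := by rw [← mul_assoc]; gcongr
      _ ≤ K * (t + 1) ^ (-α) := by gcongr; exact rpow_neg_mul_one_sub_div_le hα ht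

theorem le_mul_rpow_neg_add_one_of_small {α A t x y : ℝ} (hα : 0 ≤ α) (hA : 0 ≤ A)
    (ht : 1 ≤ t) (hx : x < A * t ^ (-α)) (hy : y ≤ x + A * (t + 1) ^ (-α)) :
    y ≤ (2 ^ α + 1) * A * (t + 1) ^ (-α) := by
  have hdouble := rpow_neg_le_two_rpow_mul_rpow_neg_add_one hα ht
  calc y ≤ A * t ^ (-α) + A * (t + 1) ^ (-α) := by linarith
    _ ≤ A * (2 ^ α * (t + 1) ^ (-α)) + A * (t + 1) ^ (-α) := by gcongr
    _ = (2 ^ α + 1) * A * (t + 1) ^ (-α) := by ring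

theorem stmt_11 (α β : ℝ) (hα : 0 < α) (hαβ : α < β) :
    ∃ C : ℝ, 0 < C ∧
      ∀ (A : ℝ) (a : ℕ → ℝ), 0 < A → a 0 < A →
      (∀ n : ℕ, 1 ≤ n → a n ≤ a (n - 1) + A * (n : ℝ) ^ (-α)) →
      (∀ ν : ℕ, 1 ≤ ν → A * (ν : ℝ) ^ (-α) ≤ a ν → a (ν + 1) ≤ a ν * (1 - β / ν)) →
      ∀ n : ℕ, 1 ≤ n → a n ≤ C * A * (n : ℝ) ^ (-α) := by
  have h2α : (1 : ℝ) ≤ 2 ^ α := Real.one_le_rpow one_le_two hα.le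
  refine ⟨2 ^ α + 2, by positivity, fun A a hA ha₀ hgrowth hdecay n hn => ?_⟩
  induction n, hn using Nat.le_induction with
  | base =>
    have ha₁ : a 1 ≤ a 0 + A := by simpa using hgrowth 1 le_rfl
    simp only [Nat.cast_one, Real.one_rpow, mul_one]
    nlinarith
  | succ n hn ih =>
    have ht : (1 : ℝ) ≤ n := by exact_mod_cast hn
    push_cast
    by_cases hlarge : A * (n : ℝ) ^ (-α) ≤ a n
    · exact le_mul_rpow_neg_add_one_of_decay hα.le hαβ.le (by linarith) (by positivity)
        ((by positivity : (0 : ℝ) ≤ A * (n : ℝ) ^ (-α)).trans hlarge) ih (hdecay n hn hlarge)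
    · have hstep : a (n + 1) ≤ a n + A * ((n : ℝ) + 1) ^ (-α) := by
        simpa using hgrowth (n + 1) (by omega)
      calc a (n + 1) ≤ (2 ^ α + 1) * A * ((n : ℝ) + 1) ^ (-α) :=
            le_mul_rpow_neg_add_one_of_small hα.le hA.le ht (not_le.1 hlarge) hstep
        _ ≤ (2 ^ α + 2) * A * ((n : ℝ) + 1) ^ (-α) := by gcongr; linarith
end

section
/- Let $X$ be a uniformly smooth Banach space with modulus of smoothness $\rho(u) \le \gamma u^q$ for some $1 < q \le 2$ and $\gamma > 0$, let ${\mathcal D}$ be a dictionary in $X$, and let $p = q/(q-1)$. Set $\varepsilon_n := K_1 \gamma^{1/q} n^{-1/p}$ for a fixed constant $K_1 > 0$. Then for any $f \in \operatorname{conv}({\mathcal D})$, the residuals $f_m$ of the Incremental Algorithm IA($\varepsilon$) applied to $f$ satisfy $\|f_m\| \le C(K_1) \gamma^{1/q} m^{-1/p}$ for all $m \ge 1$, with a constant $C(K_1)$ depending only on $K_1$. -/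
/-- The modulus of smoothness of a normed space. -/
noncomputable def modSmooth (X : Type*) [NormedAddCommGroup X] [NormedSpace ℝ X] (u : ℝ) : ℝ :=
  sSup {r : ℝ | ∃ x y : X, ‖x‖ = 1 ∧ ‖y‖ = 1 ∧
    r = (‖x + u • y‖ + ‖x - u • y‖) / 2 - 1}

/-!
Write `a_n := n ‖f_n‖`. The update rule gives `n f_n = (n-1) f_{n-1} + (f - φ_n)`, and the
smoothness inequality `‖h + g‖ ≤ ‖h‖ + F_h g + 2γ ‖g‖^q ‖h‖^(1-q)` at `h = (n-1) f_{n-1}`,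
with the choice of `φ_n` bounding `F_h g`, yields
`a_n ≤ a_{n-1} + K₁ γ^(1/q) n^(1/q-1) + 8γ a_{n-1}^(1-q)`.
One proves `a_n ≤ C γ^(1/q) n^(1/q)` with `C = 2K₁ + 16` by induction: if `a_{n-1}` is small
the triangle inequality suffices; otherwise the last term is at most `8 γ^(1/q) n^(1/q-1)`, and
the whole increment is absorbed by `n^(1/q) - (n-1)^(1/q) ≥ n^(1/q-1)/q` (Bernoulli).
The constant does not depend on `γ` because `ρ(2) ≥ 1` in a nontrivial space, so `γ ≥ 1/4`.
-/

open Real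

lemma rpow_le_rpow_add_one_sub {s x : ℝ} (hs₀ : 0 ≤ s) (hs₁ : s ≤ 1) (hx : 0 ≤ x) :
    x ^ s ≤ (x + 1) ^ s - s * (x + 1) ^ (s - 1) := by
  set N := x + 1
  have hN : 0 < N := by positivity
  have hN₁ : N⁻¹ ≤ 1 := inv_le_one_of_one_le₀ (by linarith)
  have hxN : x = N * (1 + -N⁻¹) := by field_simp; ring
  calc x ^ s = N ^ s * (1 + -N⁻¹) ^ s := by rw [hxN, mul_rpow hN.le (by linarith)]
    _ ≤ N ^ s * (1 + s * -N⁻¹) := by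
      gcongr
      exact rpow_one_add_le_one_add_mul_self (by linarith) hs₀ hs₁
    _ = N ^ s - s * N ^ (s - 1) := by rw [rpow_sub_one hN.ne']; ring

lemma mul_rpow_one_sub_le {γ q a b : ℝ} (hγ : 0 < γ) (hq : 1 ≤ q) (hb : 0 < b)
    (hab : γ ^ (1 / q) * b ^ (1 / q) ≤ a) : γ * a ^ (1 - q) ≤ γ ^ (1 / q) * b ^ (1 / q - 1) := by
  have hq₀ : q ≠ 0 := by positivity
  calc γ * a ^ (1 - q) ≤ γ * (γ ^ (1 / q) * b ^ (1 / q)) ^ (1 - q) := by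
        have hpos : 0 < γ ^ (1 / q) * b ^ (1 / q) := by positivity
        exact mul_le_mul_of_nonneg_left (rpow_le_rpow_of_nonpos hpos hab (by linarith)) hγ.le
    _ = γ * (γ * b) ^ (1 / q - 1) := by
        rw [← mul_rpow hγ.le hb.le, ← rpow_mul (by positivity)]
        congr 2
        field_simp
    _ = γ ^ (1 / q) * b ^ (1 / q - 1) := by
        rw [mul_rpow hγ.le hb.le, rpow_sub_one hγ.ne', rpow_sub_one hb.ne']
        field_simp

lemma two_rpow_le_four {q : ℝ} (hq : q ≤ 2) : (2 : ℝ) ^ q ≤ 4 := by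
  calc (2 : ℝ) ^ q ≤ 2 ^ (2 : ℝ) := rpow_le_rpow_of_exponent_le one_le_two hq
    _ = 4 := by rw [rpow_two]; norm_num

section ModulusOfSmoothness

variable {X : Type*} [NormedAddCommGroup X] [NormedSpace ℝ X]

lemma modSmooth_bddAbove (u : ℝ) :
    BddAbove {r : ℝ | ∃ x y : X, ‖x‖ = 1 ∧ ‖y‖ = 1 ∧
      r = (‖x + u • y‖ + ‖x - u • y‖) / 2 - 1} := by
  refine ⟨|u|, ?_⟩
  rintro r ⟨x, y, hx, hy, rfl⟩
  have h₁ := norm_add_le x (u • y)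
  have h₂ := norm_sub_le x (u • y)
  rw [norm_smul, hx, hy, Real.norm_eq_abs, mul_one] at h₁ h₂
  linarith

lemma le_modSmooth {x y : X} (hx : ‖x‖ = 1) (hy : ‖y‖ = 1) (u : ℝ) :
    (‖x + u • y‖ + ‖x - u • y‖) / 2 - 1 ≤ modSmooth X u :=
  le_csSup (modSmooth_bddAbove u) ⟨x, y, hx, hy, rfl⟩

lemma sub_one_le_modSmooth [Nontrivial X] {u : ℝ} (hu : 0 ≤ u) : u - 1 ≤ modSmooth X u := by
  obtain ⟨e, he⟩ := exists_norm_eq X zero_le_one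
  refine le_trans ?_ (le_modSmooth he he u)
  have h₁ : e + u • e = (1 + u) • e := by module
  have h₂ : e - u • e = (1 - u) • e := by module
  rw [h₁, h₂, norm_smul, norm_smul, he, Real.norm_eq_abs, Real.norm_eq_abs,
    abs_of_nonneg (by linarith)]
  linarith [neg_abs_le (1 - u)]

lemma norm_add_add_norm_sub_le {h g : X} (hh : h ≠ 0) (hg : g ≠ 0) :
    ‖h + g‖ + ‖h - g‖ ≤ 2 * ‖h‖ * (1 + modSmooth X (‖g‖ / ‖h‖)) := by
  have hh₀ : 0 < ‖h‖ := norm_pos_iff.mpr hh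
  have hg₀ : 0 < ‖g‖ := norm_pos_iff.mpr hg
  have hh₁ : ‖‖h‖⁻¹ • h‖ = 1 := norm_smul_inv_norm hh
  have hg₁ : ‖‖g‖⁻¹ • g‖ = 1 := norm_smul_inv_norm hg
  have key := le_modSmooth hh₁ hg₁ (‖g‖ / ‖h‖)
  have hsmul : (‖g‖ / ‖h‖) • ‖g‖⁻¹ • g = ‖h‖⁻¹ • g := by
    rw [smul_smul]; congr 1; field_simp
  rw [hsmul, ← smul_add, ← smul_sub, norm_smul, norm_smul, norm_inv, norm_norm] at key
  set ρ := modSmooth X (‖g‖ / ‖h‖)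
  have hmul : ‖h‖⁻¹ * (‖h + g‖ + ‖h - g‖) ≤ 2 * (1 + ρ) := by linarith
  calc ‖h + g‖ + ‖h - g‖ = ‖h‖ * (‖h‖⁻¹ * (‖h + g‖ + ‖h - g‖)) := by
        field_simp
    _ ≤ ‖h‖ * (2 * (1 + ρ)) := by gcongr
    _ = 2 * ‖h‖ * (1 + ρ) := by ring

lemma norm_add_le_of_modSmooth_le {γ q : ℝ} (hγ : 0 ≤ γ)
    (hmod : ∀ u : ℝ, 0 < u → modSmooth X u ≤ γ * u ^ q) {h g : X} {F : X →L[ℝ] ℝ}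
    (hh : h ≠ 0) (hF : ‖F‖ ≤ 1) (hFh : F h = ‖h‖) :
    ‖h + g‖ ≤ ‖h‖ + F g + 2 * γ * ‖g‖ ^ q * ‖h‖ ^ (1 - q) := by
  rcases eq_or_ne g 0 with rfl | hg
  · simp only [add_zero, map_zero, le_add_iff_nonneg_right]
    positivity
  have hh₀ : 0 < ‖h‖ := norm_pos_iff.mpr hh
  have hFsub : ‖h‖ - F g ≤ ‖h - g‖ := by
    have := (le_abs_self _).trans ((F.le_opNorm (h - g)).trans
      (mul_le_of_le_one_left (norm_nonneg _) hF))
    rwa [map_sub, hFh] at this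
  have hρ := hmod (‖g‖ / ‖h‖) (by positivity)
  have hpow : ‖h‖ * (‖g‖ / ‖h‖) ^ q = ‖g‖ ^ q * ‖h‖ ^ (1 - q) := by
    rw [div_rpow (norm_nonneg _) hh₀.le, rpow_sub hh₀, rpow_one]
    field_simp
  have := norm_add_add_norm_sub_le hh hg
  nlinarith

lemma quarter_le_of_modSmooth_le [Nontrivial X] {γ q : ℝ} (hq : q ≤ 2)
    (hmod : ∀ u : ℝ, 0 < u → modSmooth X u ≤ γ * u ^ q) : 1 / 4 ≤ γ := by
  have := (sub_one_le_modSmooth (X := X) zero_le_two).trans (hmod 2 two_pos)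
  nlinarith [two_rpow_le_four hq, rpow_pos_of_pos two_pos q]

end ModulusOfSmoothness

lemma norm_le_of_mem_closure_convexHull {E : Type*} [SeminormedAddCommGroup E]
    [NormedSpace ℝ E] {D : Set E} {r : ℝ} (hD : ∀ g ∈ D, ‖g‖ ≤ r) {f : E}
    (hf : f ∈ closure (convexHull ℝ D)) : ‖f‖ ≤ r := by
  have hball : closure (convexHull ℝ D) ⊆ Metric.closedBall 0 r :=
    closure_minimal (convexHull_min (fun g hg => mem_closedBall_zero_iff.mpr (hD g hg))
      (convex_closedBall 0 r)) Metric.isClosed_closedBall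
  exact mem_closedBall_zero_iff.mp (hball hf)

lemma nontrivial_of_norm_eq_one {E : Type*} [NormedAddCommGroup E] [NormedSpace ℝ E]
    {F : E →L[ℝ] ℝ} (hF : ‖F‖ = 1) : Nontrivial E := by
  obtain ⟨v, hv⟩ := F.exists_ne_zero (norm_ne_zero_iff.mp (hF ▸ one_ne_zero))
  exact nontrivial_of_ne v 0 fun h => hv (by rw [h, map_zero])

lemma add_one_smul_residual_succ {E : Type*} [AddCommGroup E] [Module ℝ E] {f : E}
    {φ G fres : ℕ → E} (hf0 : fres 0 = f) (hG0 : G 0 = 0)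
    (hstep : ∀ m : ℕ, 1 ≤ m →
      G m = (1 - 1 / (m : ℝ)) • G (m - 1) + (m : ℝ)⁻¹ • φ m ∧ fres m = f - G m)
    (n : ℕ) : ((n : ℝ) + 1) • fres (n + 1) = (n : ℝ) • fres n + (f - φ (n + 1)) := by
  have hres : ∀ n, fres n = f - G n
    | 0 => by rw [hf0, hG0, sub_zero]
    | n + 1 => (hstep (n + 1) n.succ_pos).2
  have : (n : ℝ) + 1 ≠ 0 := by positivity
  rw [hres, hres, (hstep (n + 1) n.succ_pos).1]
  push_cast
  match_scalars
  · ring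
  · field_simp
    ring
  · field_simp

lemma le_mul_rpow_add_one_of_step {K γ q x a a' : ℝ} (hK : 0 ≤ K) (hγ : 1 / 4 ≤ γ)
    (hq₁ : 1 < q) (hq₂ : q ≤ 2) (hx : 0 ≤ x) (ha : a ≤ (2 * K + 16) * γ ^ (1 / q) * x ^ (1 / q))
    (htri : a' ≤ a + 2)
    (hsmooth : 0 < a → a' ≤ a + K * γ ^ (1 / q) * (x + 1) ^ (1 / q - 1) + 8 * γ * a ^ (1 - q)) :
    a' ≤ (2 * K + 16) * γ ^ (1 / q) * (x + 1) ^ (1 / q) := by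
  set C := 2 * K + 16
  set t := γ ^ (1 / q)
  set N := x + 1
  have hq₀ : 0 < q := by linarith
  have hs : 1 / q ≤ 1 := (div_le_one hq₀).mpr hq₁.le
  have ht : 1 / 4 ≤ t := (self_le_rpow_of_le_one (by norm_num) (by norm_num) hs).trans
    (rpow_le_rpow (by norm_num) hγ (by positivity))
  have hN : 1 ≤ N ^ (1 / q) := one_le_rpow (by linarith) (by positivity)
  by_cases hsmall : a ≤ C / 2 * t * N ^ (1 / q)
  · have : (2 : ℝ) ≤ C / 2 * t * N ^ (1 / q) :=
      calc (2 : ℝ) = 8 * (1 / 4) * 1 := by norm_num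
        _ ≤ C / 2 * t * N ^ (1 / q) := by gcongr; linarith
    linarith
  rw [not_le] at hsmall
  have hbase : t * N ^ (1 / q) ≤ a := by
    have : 0 ≤ t * N ^ (1 / q) := by positivity
    nlinarith
  have hterm : γ * a ^ (1 - q) ≤ t * N ^ (1 / q - 1) :=
    mul_rpow_one_sub_le (by linarith) hq₁.le (by positivity) hbase
  have hbern : x ^ (1 / q) ≤ N ^ (1 / q) - 1 / q * N ^ (1 / q - 1) :=
    rpow_le_rpow_add_one_sub (by positivity) hs hx
  have hCq : K + 8 ≤ C * (1 / q) := by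
    have : 1 / 2 ≤ 1 / q := one_div_le_one_div_of_le hq₀ hq₂
    nlinarith
  have htN : 0 ≤ t * N ^ (1 / q - 1) := by positivity
  have ha₀ : 0 < a := (by positivity : 0 < t * N ^ (1 / q)).trans_le hbase
  calc a' ≤ a + (K + 8) * (t * N ^ (1 / q - 1)) := by linarith [hsmooth ha₀]
    _ ≤ C * t * (N ^ (1 / q) - 1 / q * N ^ (1 / q - 1)) + C * (1 / q) * (t * N ^ (1 / q - 1)) := by
        gcongr
        exact ha.trans (by gcongr)
    _ = C * t * N ^ (1 / q) := by ring

lemma natCast_mul_norm_le_of_incremental {X : Type*} [NormedAddCommGroup X] [NormedSpace ℝ X]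
    {K γ q : ℝ} (hK : 0 ≤ K) (hγ : 1 / 4 ≤ γ) (hq₁ : 1 < q) (hq₂ : q ≤ 2)
    (hmod : ∀ u : ℝ, 0 < u → modSmooth X u ≤ γ * u ^ q) {f : X} {φ fres : ℕ → X}
    {F : ℕ → X →L[ℝ] ℝ} (hφ : ∀ n, ‖f - φ (n + 1)‖ ≤ 2)
    (hF : ∀ n, ‖F n‖ ≤ 1 ∧ F n (fres n) = ‖fres n‖)
    (hε : ∀ n : ℕ, -(K * γ ^ (1 / q) * ((n : ℝ) + 1) ^ (1 / q - 1)) ≤ F n (φ (n + 1) - f))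
    (hrec : ∀ n : ℕ, ((n : ℝ) + 1) • fres (n + 1) = (n : ℝ) • fres n + (f - φ (n + 1)))
    (n : ℕ) : n * ‖fres n‖ ≤ (2 * K + 16) * γ ^ (1 / q) * (n : ℝ) ^ (1 / q) := by
  induction n with
  | zero =>
    rw [Nat.cast_zero, zero_mul]
    exact mul_nonneg (mul_nonneg (by linarith) (by positivity)) (by positivity)
  | succ n ih =>
    set h := (n : ℝ) • fres n
    set g := f - φ (n + 1)
    have hnorm : ((n : ℝ) + 1) * ‖fres (n + 1)‖ = ‖h + g‖ := by
      rw [← hrec, norm_smul, Real.norm_of_nonneg (by positivity)]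
    have hh : ‖h‖ = n * ‖fres n‖ := by rw [norm_smul, Real.norm_natCast]
    push_cast
    rw [hnorm]
    refine le_mul_rpow_add_one_of_step hK hγ hq₁ hq₂ n.cast_nonneg ih ?_ fun ha => ?_
    · rw [← hh]
      linarith [norm_add_le h g, hφ n]
    rw [← hh] at ha ⊢
    have hFh : F n h = ‖h‖ := by rw [map_smul, smul_eq_mul, (hF n).2, hh]
    have hsmooth := norm_add_le_of_modSmooth_le (g := g) (by linarith) hmod (norm_pos_iff.mp ha)
      (hF n).1 hFh
    have hFg : F n g = -F n (φ (n + 1) - f) := by rw [← map_neg, neg_sub]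
    have hgq : ‖g‖ ^ q ≤ 4 :=
      (rpow_le_rpow (norm_nonneg _) (hφ n) (by linarith)).trans (two_rpow_le_four hq₂)
    have hterm : 2 * γ * ‖g‖ ^ q * ‖h‖ ^ (1 - q) ≤ 2 * γ * 4 * ‖h‖ ^ (1 - q) := by
      gcongr
    linarith [hε n]

/-- Rate of convergence of the Incremental Algorithm IA(ε) with schedule
`ε n = K₁ γ^(1/q) n^(-1/p)`, `p = q/(q-1)`, on the closed convex hull of a dictionary. -/
theorem stmt_18 (K1 : ℝ) (hK1 : 0 < K1) :
    ∃ C : ℝ, 0 < C ∧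
      ∀ (X : Type) [NormedAddCommGroup X] [NormedSpace ℝ X] [CompleteSpace X],
      ∀ (γ q p : ℝ), 0 < γ → 1 < q → q ≤ 2 → p = q / (q - 1) →
      (∀ u : ℝ, 0 < u → modSmooth X u ≤ γ * u ^ q) →
      ∀ (D : Set X), (∀ g ∈ D, ‖g‖ ≤ 1) →
      ∀ f : X, f ∈ closure (convexHull ℝ D) →
      ∀ (φ G fres : ℕ → X) (F : ℕ → (X →L[ℝ] ℝ)),
      fres 0 = f → G 0 = 0 →
      (∀ m : ℕ, ‖F m‖ = 1 ∧ F m (fres m) = ‖fres m‖) →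
      (∀ m : ℕ, 1 ≤ m →
        φ m ∈ D ∧
        F (m - 1) (φ m - f) ≥ -(K1 * γ ^ (1 / q) * (m : ℝ) ^ (-(1 / p))) ∧
        G m = (1 - 1 / (m : ℝ)) • G (m - 1) + ((m : ℝ))⁻¹ • φ m ∧
        fres m = f - G m) →
      ∀ m : ℕ, 1 ≤ m → ‖fres m‖ ≤ C * γ ^ (1 / q) * (m : ℝ) ^ (-(1 / p)) := by
  refine ⟨2 * K1 + 16, by linarith, ?_⟩
  intro X _ _ _ γ q p _ hq₁ hq₂ hp hmod D hD f hf φ G fres F hf0 hG0 hF hstep m hm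
  have hexp : -(1 / p) = 1 / q - 1 := by
    rw [hp]
    field_simp
    ring
  have : Nontrivial X := nontrivial_of_norm_eq_one (hF 0).1
  have hγ₄ : 1 / 4 ≤ γ := quarter_le_of_modSmooth_le hq₂ hmod
  have hf₁ := norm_le_of_mem_closure_convexHull hD hf
  have key := natCast_mul_norm_le_of_incremental hK1.le hγ₄ hq₁ hq₂ hmod
    (fres := fres) (F := F)
    (fun n => (norm_sub_le _ _).trans (by linarith [hD _ (hstep (n + 1) n.succ_pos).1]))
    (fun n => ⟨(hF n).1.le, (hF n).2⟩)
    (fun n => by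
      have hε := (hstep (n + 1) n.succ_pos).2.1
      rw [hexp] at hε
      exact_mod_cast hε)
    (add_one_smul_residual_succ hf0 hG0 fun m hm => (hstep m hm).2.2)
    m
  have hm₀ : (0 : ℝ) < m := by exact_mod_cast hm
  rw [hexp, rpow_sub_one hm₀.ne', ← mul_div_assoc, le_div_iff₀ hm₀]
  linarith
end
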